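/- arXiv:2411.04479 — 8 statements merged into one kernel-verified Lean document; each statement's English description precedes it below -/
import Mathlib

section
/- Let M be a family of star patterns giving a partition of Z_q^n into subcubes all of the same dimension n-m. Then in any fixed coordinate i, each value a ∈ Z_q occurs as the i-th entry of the same number of star patterns of the partition (i.e., the number of patterns p in the family with p_i = a is independent of a). -/
/-! Count each slice `{x | x i = a}` of the cube through the partition. A subcube with a star in
coordinate `i` meets all slices in equally many points, since changing coordinate `i` maps one
slice bijectively onto another; a subcube with entry `c` in coordinate `i` lies entirely in the
slice of `c`. All slices of the cube have the same size and all subcubes have the same size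
`q ^ (n - m) > 0`, so the number of subcubes with entry `a` in coordinate `i` cannot depend
on `a`. -/

/-- The subcube of `(Z_q)^C` defined by a star pattern `p` (`none` = `*`):
all vectors agreeing with `p` on every coordinate where `p` is numerical. -/
def Subcube {q : ℕ} {C : Type} (p : C → Option (ZMod q)) : Set (C → ZMod q) :=
  {x | ∀ c : C, ∀ a : ZMod q, p c = some a → x c = a}

/-- The number of numerical entries of a star pattern. -/
noncomputable def numCount {q : ℕ} {C : Type} (p : C → Option (ZMod q)) : ℕ :=
  Nat.card {c : C // (p c).isSome}

/-- The rows of the star matrix `M` define pairwise disjoint subcubes covering the cube. -/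
def IsPartitionMatrix (q : ℕ) {R C : Type} (M : R → C → Option (ZMod q)) : Prop :=
  (∀ r r' : R, r ≠ r' → Subcube (M r) ∩ Subcube (M r') = ∅) ∧
  (∀ x : C → ZMod q, ∃ r : R, x ∈ Subcube (M r))

/-- A star matrix is A-primitive if every column has at least one numerical entry. -/
def APrimitive {q : ℕ} {R C : Type} (M : R → C → Option (ZMod q)) : Prop :=
  ∀ c : C, ∃ r : R, (M r c).isSome

lemma card_inter_slice_eq {C α : Type} [DecidableEq C] {S : Set (C → α)} {i : C}
    (hS : ∀ x b, Function.update x i b ∈ S ↔ x ∈ S) (a b : α) :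
    Nat.card ↥(S ∩ {x | x i = a}) = Nat.card ↥(S ∩ {x | x i = b}) :=
  Nat.card_congr
    { toFun x := ⟨Function.update x.1 i b, (hS _ _).2 x.2.1, Function.update_self ..⟩
      invFun y := ⟨Function.update y.1 i a, (hS _ _).2 y.2.1, Function.update_self ..⟩
      left_inv x := Subtype.ext <|
        (Function.update_idem ..).trans (Function.update_eq_self_iff.2 x.2.2.symm)
      right_inv y := Subtype.ext <|
        (Function.update_idem ..).trans (Function.update_eq_self_iff.2 y.2.2.symm) }

section Subcube

variable {q : ℕ} {C : Type} {p : C → Option (ZMod q)}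

lemma subcube_eq_univ_pi : Subcube p = Set.univ.pi fun c => {y | ∀ a, p c = some a → y = a} := by
  ext x
  simp [Subcube]

lemma card_subcube [Fintype C] :
    Nat.card (Subcube p) = q ^ (Fintype.card C - numCount p) := by
  classical
  have hfactor : ∀ c, Nat.card {y : ZMod q | ∀ a, p c = some a → y = a} =
      if (p c).isSome then 1 else q := fun c => by
    rcases p c with _ | a <;> simp [Nat.card_zmod]
  rw [subcube_eq_univ_pi, Nat.card_congr (Equiv.Set.univPi _), Nat.card_pi]
  simp only [hfactor, Finset.prod_ite, Finset.prod_const_one, Finset.prod_const, one_mul]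
  rw [numCount, Nat.card_eq_fintype_card, ← Fintype.card_subtype_compl, Fintype.card_subtype]

lemma card_subcube_inter_slice_of_eq_some {i : C} {c : ZMod q} (hi : p i = some c)
    (a : ZMod q) :
    Nat.card ↥(Subcube p ∩ {x | x i = a}) = if c = a then Nat.card (Subcube p) else 0 := by
  split_ifs with hca
  · rw [Set.inter_eq_left.2 fun x hx => hca ▸ hx i c hi]
  · have hempty : Subcube p ∩ {x | x i = a} = ∅ :=
      Set.eq_empty_of_forall_notMem fun x hx => hca ((hx.1 i c hi).symm.trans hx.2)
    rw [hempty, Nat.card_of_isEmpty]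

variable [DecidableEq C]

lemma update_mem_subcube_iff {i : C} (hi : p i = none) (x : C → ZMod q) (b : ZMod q) :
    Function.update x i b ∈ Subcube p ↔ x ∈ Subcube p := by
  refine forall_congr' fun c => ?_
  rcases eq_or_ne c i with rfl | hc
  · simp [hi]
  · rw [Function.update_of_ne hc]

lemma card_subcube_inter_slice_add_ite (i : C) (a b : ZMod q) :
    Nat.card ↥(Subcube p ∩ {x | x i = a}) + (if p i = some b then Nat.card (Subcube p) else 0) =
      Nat.card ↥(Subcube p ∩ {x | x i = b}) +
        (if p i = some a then Nat.card (Subcube p) else 0) := by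
  rcases hi : p i with _ | c
  · simp [card_inter_slice_eq (update_mem_subcube_iff hi) a b]
  · simp only [card_subcube_inter_slice_of_eq_some hi, Option.some.injEq]
    exact add_comm _ _

end Subcube

lemma IsPartitionMatrix.card_eq_sum_card_inter {q : ℕ} {R C : Type} [Fintype R]
    {M : R → C → Option (ZMod q)} (hM : IsPartitionMatrix q M) (T : Set (C → ZMod q))
    [Finite T] : Nat.card T = ∑ r, Nat.card ↥(Subcube (M r) ∩ T) := by
  have hT : T = ⋃ r, Subcube (M r) ∩ T := by
    rw [← Set.iUnion_inter, Set.eq_univ_of_forall (fun x => Set.mem_iUnion.2 (hM.2 x)),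
      Set.univ_inter]
  have hdisj : Pairwise (Function.onFun Disjoint fun r => Subcube (M r) ∩ T) := fun r r' h =>
    (Set.disjoint_iff_inter_eq_empty.2 (hM.1 r r' h)).mono Set.inter_subset_left
      Set.inter_subset_left
  simp_rw [Nat.card_coe_set_eq]
  conv_lhs => rw [hT]
  rw [Set.ncard_iUnion_of_finite (fun r => (Set.toFinite T).inter_of_right _) hdisj,
    finsum_eq_sum_of_fintype]

theorem stmt1_general (q n m : ℕ) (hq : 2 ≤ q)
    (M : Fin (q ^ m) → Fin n → Option (ZMod q))
    (hpart : IsPartitionMatrix q M)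
    (hrows : ∀ r, numCount (M r) = m)
    (i : Fin n) (a b : ZMod q) :
    Nat.card {r : Fin (q ^ m) // M r i = some a} =
      Nat.card {r : Fin (q ^ m) // M r i = some b} := by
  have : NeZero q := ⟨by omega⟩
  have hcard : ∀ r, Nat.card (Subcube (M r)) = q ^ (n - m) := fun r => by
    rw [card_subcube, hrows, Fintype.card_fin]
  have hcount : ∀ d, (∑ r, if M r i = some d then Nat.card (Subcube (M r)) else 0) =
      Nat.card {r // M r i = some d} * q ^ (n - m) := fun d => by
    simp only [hcard, Finset.sum_ite, Finset.sum_const_zero, add_zero, Finset.sum_const,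
      smul_eq_mul, Nat.card_eq_fintype_card, Fintype.card_subtype]
  have hslices : ∑ r, Nat.card ↥(Subcube (M r) ∩ {x | x i = a}) =
      ∑ r, Nat.card ↥(Subcube (M r) ∩ {x | x i = b}) := by
    rw [← hpart.card_eq_sum_card_inter, ← hpart.card_eq_sum_card_inter, ← Set.univ_inter {x | _},
      card_inter_slice_eq (fun _ _ => Iff.rfl) a b, Set.univ_inter]
  have hsum := Finset.sum_congr rfl fun r (_ : r ∈ Finset.univ) =>
    card_subcube_inter_slice_add_ite (p := M r) i a b
  rw [Finset.sum_add_distrib, Finset.sum_add_distrib, hslices, hcount, hcount] at hsum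
  exact (Nat.eq_of_mul_eq_mul_right (pow_pos (Nat.pos_of_neZero q) _)
    (Nat.add_left_cancel hsum)).symm

/-- In a partition of `Z_q^n` into `q^m` subcubes of dimension `n - m`, in any fixed
column every value `a ∈ Z_q` occurs as an entry the same number of times. -/
theorem stmt1 (q n m : ℕ) (hq : 2 ≤ q) (hmn : m ≤ n)
    (M : Fin (q ^ m) → Fin n → Option (ZMod q))
    (hpart : IsPartitionMatrix q M)
    (hrows : ∀ r, numCount (M r) = m)
    (i : Fin n) (a b : ZMod q) :
    Nat.card {r : Fin (q ^ m) // M r i = some a} =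
      Nat.card {r : Fin (q ^ m) // M r i = some b} :=
  stmt1_general q n m hq M hpart hrows i a b
end

section
/- Let M be a partition of Z_q^n into subcubes of the same dimension n-m, let i ≠ j be two coordinates, and let π be a permutation of Z_q. Let R be the set of star patterns of the partition whose entries in both coordinates i and j are numerical. Then for each c ∈ Z_q, the number of patterns p ∈ R with p_i + π(p_j) ≡ c (mod q) is the same (equal to |R|/q). -/
/-
Put `f x = x i + π (x j)`. On the whole cube, and on every subcube with a star in column `i` or
`j`, translating that starred coordinate permutes the fibres of `f`, so each fibre holds exactly
a `1/q` fraction of the points; on a subcube numerical in both columns `f` is constant. Counting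
the points of the cube with `f x = c` subcube by subcube, the rows with a star cancel against
their share of `q ^ n`, and as all subcubes have the same size `q ^ (n - m)`, what remains is
`q · #{p ∈ R : p i + π (p j) = c} = #R`.
-/

open Function Finset

variable {q : ℕ} {C : Type}

theorem card_subcube_s2 [Fintype C] [NeZero q] (p : C → Option (ZMod q)) :
    Nat.card (Subcube p) = q ^ Nat.card {c // p c = none} := by
  classical
  have hcoord : ∀ c, Nat.card {y : ZMod q // ∀ a, p c = some a → y = a} =
      if p c = none then q else 1 := by
    intro c
    cases p c <;> simp
  have e : Subcube p ≃ ∀ c, {y : ZMod q // ∀ a, p c = some a → y = a} :=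
    Equiv.subtypePiEquivPi (p := fun c y => ∀ a, p c = some a → y = a)
  rw [Nat.card_congr e, Nat.card_pi, Finset.prod_congr rfl fun c _ => hcoord c,
    Finset.prod_ite, Finset.prod_const_one, mul_one, Finset.prod_const, Nat.card_eq_fintype_card,
    Fintype.card_subtype]

theorem card_stars_add_numCount [Fintype C] (p : C → Option (ZMod q)) :
    Nat.card {c // p c = none} + numCount p = Fintype.card C := by
  rw [numCount, ← Nat.card_eq_fintype_card, ← Nat.card_sum]
  exact Nat.card_congr <| (Equiv.sumCongr (Equiv.refl _)
    (Equiv.subtypeEquivRight fun c => by simp [Option.isSome_iff_ne_none])).trans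
    (Equiv.sumCompl fun c => p c = none)

theorem card_subcube_eq_pow_sub [Fintype C] [NeZero q] (p : C → Option (ZMod q)) :
    Nat.card (Subcube p) = q ^ (Fintype.card C - numCount p) := by
  rw [card_subcube_s2, ← card_stars_add_numCount p, Nat.add_sub_cancel]

theorem card_fiber_mul_card_eq_card {α G : Type} [Finite α] [AddGroup G] [Fintype G]
    (f : α → G) (hf : ∀ d : G, ∃ σ : α → α, Injective σ ∧ ∀ x, f (σ x) = f x + d)
    (c : G) :
    Nat.card {x // f x = c} * Fintype.card G = Nat.card α := by
  have hle : ∀ c₁ c₂ : G, Nat.card {x // f x = c₁} ≤ Nat.card {x // f x = c₂} := by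
    intro c₁ c₂
    obtain ⟨σ, hσ, hfσ⟩ := hf (-c₁ + c₂)
    refine Nat.card_le_card_of_injective
      (fun x => ⟨σ x, by rw [hfσ, x.2, add_neg_cancel_left]⟩) fun x y h => ?_
    exact Subtype.ext (hσ (congrArg Subtype.val h))
  rw [← Nat.card_congr (Equiv.sigmaFiberEquiv f), Nat.card_sigma,
    Finset.sum_congr rfl fun c' _ => (hle c c').antisymm' (hle c' c), Finset.sum_const,
    Finset.card_univ, smul_eq_mul, mul_comm]

theorem injective_update_apply [DecidableEq C] {β : Type} (k : C) {τ : β → β}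
    (hτ : Injective τ) : Injective fun x : C → β => update x k (τ (x k)) := by
  intro x y h
  funext l
  have hl := congrFun h l
  by_cases hlk : l = k
  · subst hlk
    exact hτ (by simpa using hl)
  · simpa [update_of_ne hlk] using hl

theorem update_mem_subcube [DecidableEq C] {p : C → Option (ZMod q)} {x : C → ZMod q}
    (hx : x ∈ Subcube p) {k : C} (hk : p k = none) (y : ZMod q) : update x k y ∈ Subcube p := by
  intro l a hl
  by_cases hlk : l = k
  · subst hlk
    simp [hk] at hl
  · rw [update_of_ne hlk]
    exact hx l a hl

theorem card_subcube_fiber_mul_of_star [Finite C] [DecidableEq C] [NeZero q]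
    {p : C → Option (ZMod q)} {i j : C} (hij : i ≠ j) (hstar : p i = none ∨ p j = none)
    (π : Equiv.Perm (ZMod q)) (c : ZMod q) :
    Nat.card {x : Subcube p // x.1 i + π (x.1 j) = c} * q = Nat.card (Subcube p) := by
  suffices hshift : ∀ d, ∃ σ : Subcube p → Subcube p,
      Injective σ ∧ ∀ x, (σ x).1 i + π ((σ x).1 j) = x.1 i + π (x.1 j) + d by
    simpa only [ZMod.card] using card_fiber_mul_card_eq_card _ hshift c
  intro d
  rcases hstar with hi | hj
  · refine ⟨fun x => ⟨update x.1 i (x.1 i + d), update_mem_subcube x.2 hi _⟩,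
      fun x y h => Subtype.ext (injective_update_apply i (add_left_injective d)
        (congrArg Subtype.val h)), fun x => ?_⟩
    simp [update_of_ne hij.symm, add_right_comm]
  · refine ⟨fun x => ⟨update x.1 j (π.symm (π (x.1 j) + d)), update_mem_subcube x.2 hj _⟩,
      fun x y h => Subtype.ext (injective_update_apply j
        (π.symm.injective.comp ((add_left_injective d).comp π.injective))
        (congrArg Subtype.val h)), fun x => ?_⟩
    simp [update_of_ne hij, add_assoc]

theorem card_subcube_fiber_of_eq_some {p : C → Option (ZMod q)} {i j : C} {a b : ZMod q}
    (ha : p i = some a) (hb : p j = some b) (π : Equiv.Perm (ZMod q)) (c : ZMod q) :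
    Nat.card {x : Subcube p // x.1 i + π (x.1 j) = c} =
      if a + π b = c then Nat.card (Subcube p) else 0 := by
  have hconst : ∀ x : Subcube p, x.1 i + π (x.1 j) = a + π b := fun x => by
    rw [x.2 i a ha, x.2 j b hb]
  by_cases h : a + π b = c <;> simp [hconst, h]

theorem IsPartitionMatrix.card_eq_sum {R : Type} [Fintype R] [Finite C] [NeZero q]
    {M : R → C → Option (ZMod q)} (hM : IsPartitionMatrix q M) (P : (C → ZMod q) → Prop) :
    Nat.card {x // P x} = ∑ r, Nat.card {x : Subcube (M r) // P x.1} := by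
  rw [← Nat.card_sigma]
  refine Nat.card_congr (Equiv.ofBijective (fun s => ⟨s.2.1.1, s.2.2⟩) ⟨?_, ?_⟩).symm
  · rintro ⟨r, ⟨x, hx⟩, hP⟩ ⟨r', ⟨x', hx'⟩, hP'⟩ h
    obtain rfl : x = x' := congrArg Subtype.val h
    obtain rfl : r = r' := by
      by_contra hne
      exact (hM.1 r r' hne).subset ⟨hx, hx'⟩
    rfl
  · rintro ⟨x, hP⟩
    obtain ⟨r, hr⟩ := hM.2 x
    exact ⟨⟨r, ⟨x, hr⟩, hP⟩, rfl⟩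

theorem card_cube_fiber_mul [Fintype C] [DecidableEq C] [NeZero q] {i j : C} (hij : i ≠ j)
    (π : Equiv.Perm (ZMod q)) (c : ZMod q) :
    Nat.card {x : C → ZMod q // x i + π (x j) = c} * q = q ^ Fintype.card C := by
  have e : {x : Subcube (fun _ : C => (none : Option (ZMod q))) // x.1 i + π (x.1 j) = c} ≃
      {x : C → ZMod q // x i + π (x j) = c} :=
    (Equiv.subtypeUnivEquiv fun x => by simp [Subcube]).subtypeEquiv fun _ => Iff.rfl
  rw [← Nat.card_congr e, card_subcube_fiber_mul_of_star hij (Or.inl rfl), card_subcube_s2]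
  simp

theorem IsPartitionMatrix.sum_card_subcube {R : Type} [Fintype R] [Fintype C] [NeZero q]
    {M : R → C → Option (ZMod q)} (hM : IsPartitionMatrix q M) :
    ∑ r, Nat.card (Subcube (M r)) = q ^ Fintype.card C := by
  calc ∑ r, Nat.card (Subcube (M r)) = Nat.card (C → ZMod q) := by
        simpa using (hM.card_eq_sum fun _ => True).symm
    _ = q ^ Fintype.card C := by rw [Nat.card_fun, Nat.card_zmod, Nat.card_eq_fintype_card]

theorem card_mul_eq_card_of_sum_ite_eq {R : Type} [Fintype R] {V B : R → Prop}
    [DecidablePred V] [DecidablePred B] (hVB : ∀ r, V r → B r) {s k : ℕ} (hs : 0 < s)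
    (h : ∑ r, (if B r then (if V r then s * k else 0) else s) = ∑ _r : R, s) :
    Nat.card {r // V r} * k = Nat.card {r // B r} := by
  rw [Finset.sum_ite, ← Finset.sum_filter_add_sum_filter_not univ B, add_left_inj, Finset.sum_ite,
    sum_const_zero, add_zero, Finset.filter_filter, sum_const, sum_const, smul_eq_mul,
    smul_eq_mul, filter_congr fun r _ => and_iff_right_of_imp (hVB r)] at h
  rw [Nat.card_eq_fintype_card, Nat.card_eq_fintype_card, Fintype.card_subtype,
    Fintype.card_subtype]
  apply Nat.eq_of_mul_eq_mul_right hs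
  rw [← h]
  ring

theorem stmt2_general (q n m : ℕ) (hq : 2 ≤ q)
    (M : Fin (q ^ m) → Fin n → Option (ZMod q))
    (hpart : IsPartitionMatrix q M)
    (hrows : ∀ r, numCount (M r) = m)
    (i j : Fin n) (hij : i ≠ j) (π : Equiv.Perm (ZMod q)) (c : ZMod q) :
    Nat.card {r : Fin (q ^ m) //
        ∃ a b : ZMod q, M r i = some a ∧ M r j = some b ∧ a + π b = c} * q =
      Nat.card {r : Fin (q ^ m) // (M r i).isSome ∧ (M r j).isSome} := by
  classical
  have : NeZero q := ⟨by omega⟩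
  set V := fun r => ∃ a b : ZMod q, M r i = some a ∧ M r j = some b ∧ a + π b = c
  set B := fun r => (M r i).isSome ∧ (M r j).isSome
  set s := q ^ (n - m)
  have hsize : ∀ r, Nat.card (Subcube (M r)) = s := fun r => by
    rw [card_subcube_eq_pow_sub, hrows, Fintype.card_fin]
  have hrow : ∀ r, Nat.card {x : Subcube (M r) // x.1 i + π (x.1 j) = c} * q =
      if B r then (if V r then s * q else 0) else s := fun r => by
    by_cases hB : B r
    · obtain ⟨a, ha⟩ := Option.isSome_iff_exists.mp hB.1
      obtain ⟨b, hb⟩ := Option.isSome_iff_exists.mp hB.2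
      rw [card_subcube_fiber_of_eq_some ha hb, hsize]
      by_cases h : a + π b = c <;> simp [V, hB, ha, hb, h]
    · rw [if_neg hB, card_subcube_fiber_mul_of_star hij ?_, hsize]
      simpa only [B, not_and_or, Option.not_isSome_iff_eq_none] using hB
  have hsum : ∑ r, Nat.card {x : Subcube (M r) // x.1 i + π (x.1 j) = c} * q =
      ∑ r, Nat.card (Subcube (M r)) := by
    rw [← Finset.sum_mul, ← hpart.card_eq_sum fun x => x i + π (x j) = c,
      card_cube_fiber_mul hij, hpart.sum_card_subcube]
  refine card_mul_eq_card_of_sum_ite_eq (fun r ⟨a, b, ha, hb, _⟩ => by simp [ha, hb])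
    (pow_pos (by omega : 0 < q) (n - m)) ?_
  simpa only [hrow, hsize] using hsum

/-- Let `R` be the set of rows of the partition matrix `M` having numerical values in both
columns `i` and `j`, and `π` a permutation of `Z_q`. Then for every `c ∈ Z_q` the number of
rows of `R` with `p_i + π(p_j) = c` is the same, namely `|R| / q`. -/
theorem stmt2 (q n m : ℕ) (hq : 2 ≤ q) (hmn : m ≤ n)
    (M : Fin (q ^ m) → Fin n → Option (ZMod q))
    (hpart : IsPartitionMatrix q M)
    (hrows : ∀ r, numCount (M r) = m)
    (i j : Fin n) (hij : i ≠ j) (π : Equiv.Perm (ZMod q)) (c : ZMod q) :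
    Nat.card {r : Fin (q ^ m) //
        ∃ a b : ZMod q, M r i = some a ∧ M r j = some b ∧ a + π b = c} * q =
      Nat.card {r : Fin (q ^ m) // (M r i).isSome ∧ (M r j).isSome} :=
  stmt2_general q n m hq M hpart hrows i j hij π c
end

section
/- The rows of the fractal star matrix M_{q,m}, viewed as star patterns, define a partition of the hypercube Z_q^N, N = (q^m - 1)/(q - 1), into q^m pairwise disjoint subcubes of dimension N - m each, covering all of Z_q^N. -/
/-- Number of rows of the fractal matrix `M_{q,m}`. -/
def Nrows (q : ℕ) : ℕ → ℕ
  | 0 => 1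
  | m + 1 => q * Nrows q m

/-- Number of columns of the fractal matrix `M_{q,m}`. -/
def Ncols (q : ℕ) : ℕ → ℕ
  | 0 => 0
  | m + 1 => 1 + q * Ncols q m

/-- Entry of the fractal matrix `M_{q,m}` in row `r`, column `c` (as natural number
indices): `M_{q,0}` has one row and no columns; `M_{q,m+1}` consists of `q` horizontal
stripes indexed by `a ∈ Z_q`, stripe `a` having the constant value `a` in the first
column, a copy of `M_{q,m}` in the `a`-th of `q` column blocks, and all-stars elsewhere. -/
def fractalEntry (q : ℕ) : ℕ → ℕ → ℕ → Option (ZMod q)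
  | 0, _, _ => none
  | m + 1, r, c =>
    if c = 0 then some (Nat.cast (r / Nrows q m))
    else if (c - 1) / Ncols q m = r / Nrows q m then
      fractalEntry q m (r % Nrows q m) ((c - 1) % Ncols q m)
    else none

/-- The fractal star matrix `M_{q,m}`. -/
def fractalMatrix (q m : ℕ) : Fin (Nrows q m) → Fin (Ncols q m) → Option (ZMod q) :=
  fun r c => fractalEntry q m r.1 c.1

/-!
Row `a * q^m + s` of `M_{q,m+1}` (`a < q`, `s < q^m`) fixes the first coordinate to `a` and
otherwise repeats row `s` of `M_{q,m}` on the `a`-th column block. Two rows in different stripes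
conflict in the first column, two rows in the same stripe conflict where their rows of `M_{q,m}`
do; a vector `x` lies in the subcube of the row of stripe `x₀` whose row of `M_{q,m}` covers
the `x₀`-th block of `x`; and every row has one numerical entry more than the row of `M_{q,m}`
it repeats, so exactly `m`.
-/

open Finset

lemma Nat.exists_eq_mul_add_of_lt_mul {n k N : ℕ} (h : n < k * N) :
    ∃ a < k, ∃ s < N, n = a * N + s := by
  have hN : 0 < N := Nat.pos_of_ne_zero fun hN => by simp [hN] at h
  refine ⟨n / N, Nat.div_lt_of_lt_mul (by rwa [Nat.mul_comm]), n % N, Nat.mod_lt n hN, ?_⟩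
  rw [Nat.mul_comm, Nat.div_add_mod]

lemma Nat.mul_add_lt_mul {a k N s : ℕ} (ha : a < k) (hs : s < N) : a * N + s < k * N :=
  calc a * N + s < (a + 1) * N := by rw [Nat.succ_mul]; omega
    _ ≤ k * N := Nat.mul_le_mul_right N ha

lemma Nat.mul_add_div_of_lt {a N s : ℕ} (hs : s < N) : (a * N + s) / N = a := by
  rw [Nat.mul_comm a N, Nat.mul_add_div (by omega), Nat.div_eq_of_lt hs, Nat.add_zero]

lemma Nat.exists_eq_one_add_mul_add {c k C : ℕ} (hc0 : 0 < c) (hc : c < 1 + k * C) :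
    ∃ b < k, ∃ c' < C, c = 1 + (b * C + c') := by
  obtain ⟨b, hb, c', hc', h⟩ :=
    Nat.exists_eq_mul_add_of_lt_mul (n := c - 1) (k := k) (N := C) (by omega)
  exact ⟨b, hb, c', hc', by omega⟩

lemma Subcube_inter_eq_empty_of_some_ne {q : ℕ} {C : Type} {p p' : C → Option (ZMod q)} {c : C}
    {a a' : ZMod q} (h : p c = some a) (h' : p' c = some a') (hne : a ≠ a') :
    Subcube p ∩ Subcube p' = ∅ :=
  Set.eq_empty_of_forall_notMem fun _ ⟨hx, hx'⟩ => hne ((hx c a h).symm.trans (hx' c a' h'))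

lemma card_eq_none_add_card_filter_isSome {α : Type*} (n : ℕ) (f : ℕ → Option α) :
    Nat.card {c : Fin n // f c = none} + #{c ∈ range n | (f c).isSome} = n := by
  have hrange : #{c ∈ range n | (f c).isSome} = #{c : Fin n | (f c).isSome} := by
    rw [← Nat.Iio_eq_range, ← Fin.map_valEmbedding_univ, filter_map, card_map]
    rfl
  rw [hrange, Nat.card_eq_fintype_card, Fintype.card_subtype]
  simpa only [card_univ, Fintype.card_fin, ← Option.ne_none_iff_isSome] using
    card_filter_add_card_filter_not (s := univ) (fun c : Fin n => f c = none)

lemma Nrows_eq_pow (q m : ℕ) : Nrows q m = q ^ m := by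
  induction m with
  | zero => rfl
  | succ m ih => rw [Nrows, ih, pow_succ, Nat.mul_comm]

section
variable {q : ℕ}

lemma sub_one_mul_Ncols_add_one [NeZero q] (m : ℕ) : (q - 1) * Ncols q m + 1 = q ^ m := by
  induction m with
  | zero => rfl
  | succ m ih =>
    have hq : 1 ≤ q := NeZero.one_le
    rw [Ncols, pow_succ, ← ih]
    zify [hq]
    ring

lemma Ncols_eq_div (hq : 2 ≤ q) (m : ℕ) : Ncols q m = (q ^ m - 1) / (q - 1) := by
  have : NeZero q := ⟨by omega⟩
  rw [← sub_one_mul_Ncols_add_one m, Nat.add_sub_cancel, Nat.mul_div_cancel_left _ (by omega)]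

lemma fractalEntry_succ_zero {m s : ℕ} (a : ℕ) (hs : s < Nrows q m) :
    fractalEntry q (m + 1) (a * Nrows q m + s) 0 = some (a : ZMod q) := by
  rw [fractalEntry, if_pos rfl, Nat.mul_add_div_of_lt hs]

lemma fractalEntry_succ_block {m s c : ℕ} (a b : ℕ) (hs : s < Nrows q m) (hc : c < Ncols q m) :
    fractalEntry q (m + 1) (a * Nrows q m + s) (1 + (b * Ncols q m + c)) =
      if b = a then fractalEntry q m s c else none := by
  rw [fractalEntry, if_neg (by omega), Nat.add_sub_cancel_left, Nat.mul_add_div_of_lt hs,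
    Nat.mul_add_div_of_lt hc, Nat.mul_add_mod_of_lt hs, Nat.mul_add_mod_of_lt hc]

lemma exists_fractalEntry_some_ne (m : ℕ) {r r' : ℕ} (hr : r < Nrows q m)
    (hr' : r' < Nrows q m) (hne : r ≠ r') :
    ∃ c < Ncols q m, ∃ a a' : ZMod q,
      fractalEntry q m r c = some a ∧ fractalEntry q m r' c = some a' ∧ a ≠ a' := by
  induction m generalizing r r' with
  | zero => simp only [Nrows] at hr hr'; omega
  | succ m ih =>
    obtain ⟨a, ha, s, hs, rfl⟩ := Nat.exists_eq_mul_add_of_lt_mul hr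
    obtain ⟨a', ha', s', hs', rfl⟩ := Nat.exists_eq_mul_add_of_lt_mul hr'
    by_cases hstripe : a = a'
    · subst hstripe
      obtain ⟨c, hc, b, b', h, h', hbb'⟩ := ih hs hs' (by omega)
      have hcol := Nat.mul_add_lt_mul ha hc
      refine ⟨1 + (a * Ncols q m + c), by simp only [Ncols]; omega, b, b', ?_, ?_, hbb'⟩ <;>
        rwa [fractalEntry_succ_block _ _ ‹_› hc, if_pos rfl]
    · refine ⟨0, by simp only [Ncols]; omega, a, a', fractalEntry_succ_zero a hs,
        fractalEntry_succ_zero a' hs', fun h => hstripe ?_⟩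
      rwa [ZMod.natCast_eq_natCast_iff', Nat.mod_eq_of_lt ha, Nat.mod_eq_of_lt ha'] at h

lemma exists_fractalEntry_row_agrees [NeZero q] (m : ℕ) (x : ℕ → ZMod q) :
    ∃ r < Nrows q m, ∀ c < Ncols q m, ∀ a : ZMod q,
      fractalEntry q m r c = some a → x c = a := by
  induction m generalizing x with
  | zero => exact ⟨0, Nat.one_pos, fun c hc => absurd hc (Nat.not_lt_zero c)⟩
  | succ m ih =>
    set a := (x 0).val
    obtain ⟨s, hs, hagree⟩ := ih fun c => x (1 + (a * Ncols q m + c))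
    refine ⟨a * Nrows q m + s, Nat.mul_add_lt_mul (ZMod.val_lt (x 0)) hs, fun c hc e he => ?_⟩
    rcases Nat.eq_zero_or_pos c with rfl | hc0
    · rw [fractalEntry_succ_zero a hs, Option.some_inj] at he
      rw [← he, ZMod.natCast_zmod_val]
    · obtain ⟨b, -, c', hc', rfl⟩ := Nat.exists_eq_one_add_mul_add hc0 hc
      rw [fractalEntry_succ_block _ _ hs hc'] at he
      split_ifs at he with hba
      exact hba ▸ hagree c' hc' e he

lemma filter_isSome_fractalEntry_succ {m a s : ℕ} (ha : a < q) (hs : s < Nrows q m) :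
    {c ∈ range (Ncols q (m + 1)) | (fractalEntry q (m + 1) (a * Nrows q m + s) c).isSome} =
      insert 0 ({c ∈ range (Ncols q m) | (fractalEntry q m s c).isSome}.image
        fun c => 1 + (a * Ncols q m + c)) := by
  ext c
  simp only [mem_filter, mem_range, mem_insert, mem_image]
  constructor
  · rintro ⟨hc, hsome⟩
    rcases Nat.eq_zero_or_pos c with rfl | hc0
    · exact Or.inl rfl
    · obtain ⟨b, -, c', hc', rfl⟩ := Nat.exists_eq_one_add_mul_add hc0 hc
      rw [fractalEntry_succ_block _ _ hs hc'] at hsome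
      split_ifs at hsome with hba
      · exact Or.inr ⟨c', ⟨hc', hsome⟩, by rw [hba]⟩
      · exact absurd hsome Bool.false_ne_true
  · rintro (rfl | ⟨c, ⟨hc, hsome⟩, rfl⟩)
    · exact ⟨by simp only [Ncols]; omega, by rw [fractalEntry_succ_zero a hs]; rfl⟩
    · refine ⟨by simp only [Ncols]; have := Nat.mul_add_lt_mul ha hc; omega, ?_⟩
      rwa [fractalEntry_succ_block _ _ hs hc, if_pos rfl]

lemma card_filter_isSome_fractalEntry (m : ℕ) {r : ℕ} (hr : r < Nrows q m) :
    #{c ∈ range (Ncols q m) | (fractalEntry q m r c).isSome} = m := by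
  induction m generalizing r with
  | zero => rfl
  | succ m ih =>
    obtain ⟨a, ha, s, hs, rfl⟩ := Nat.exists_eq_mul_add_of_lt_mul hr
    rw [filter_isSome_fractalEntry_succ ha hs, card_insert_of_notMem (by simp),
      card_image_of_injective _ fun c c' h => by simpa using h, ih hs]

end

/-- The rows of `M_{q,m}` define a partition of `Z_q^N`, `N = (q^m-1)/(q-1)`, into `q^m`
pairwise disjoint covering subcubes of dimension `N - m` each. -/
theorem stmt5 (q m : ℕ) (hq : 2 ≤ q) :
    Nrows q m = q ^ m ∧
    Ncols q m = (q ^ m - 1) / (q - 1) ∧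
    IsPartitionMatrix q (fractalMatrix q m) ∧
    (∀ r : Fin (Nrows q m),
      Nat.card {c : Fin (Ncols q m) // fractalMatrix q m r c = none} = Ncols q m - m) := by
  have : NeZero q := ⟨by omega⟩
  refine ⟨Nrows_eq_pow q m, Ncols_eq_div hq m, ⟨fun r r' hne => ?_, fun x => ?_⟩,
    fun r => ?_⟩
  · obtain ⟨c, hc, a, a', h, h', ha⟩ :=
      exists_fractalEntry_some_ne m r.2 r'.2 (Fin.val_ne_of_ne hne)
    exact Subcube_inter_eq_empty_of_some_ne (c := ⟨c, hc⟩) h h' ha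
  · obtain ⟨r, hr, hagree⟩ := exists_fractalEntry_row_agrees m fun c =>
      if hc : c < Ncols q m then x ⟨c, hc⟩ else 0
    exact ⟨⟨r, hr⟩, fun c a h => by simpa [c.2] using hagree c c.2 a h⟩
  · have hcard := card_eq_none_add_card_filter_isSome (Ncols q m) (fractalEntry q m r)
    rw [card_filter_isSome_fractalEntry m r.2] at hcard
    exact Nat.eq_sub_of_add_eq hcard
end

section
/- In the fractal star matrix M_{q,m}, every column contains each value of Z_q the same number of times; specifically, a column whose size (number of numerical entries) is q^k contains each value of Z_q exactly q^{k-1} times. -/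
/-!
Column `0` of `M_{q,m+1}` holds the value `a` exactly on stripe `a`, that is `Nrows q m` times.
Any other column meets a single stripe, where it is a column of the copy of `M_{q,m}`, so it has
the value counts of that column. By induction on `m` every column is equidistributed, and a column
of size `q ^ k` then holds each value `q ^ k / q` times.
-/

open Finset

lemma card_filter_isSome {ι α : Type*} [Fintype α] [DecidableEq α] (s : Finset ι)
    (f : ι → Option α) : #{i ∈ s | (f i).isSome} = ∑ a, #{i ∈ s | f i = some a} := by
  simp only [card_filter]
  rw [sum_comm]
  refine sum_congr rfl fun i _ => ?_
  cases f i <;> simp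

lemma natCard_fin_subtype_val {N : ℕ} (P : ℕ → Prop) [DecidablePred P] :
    Nat.card {r : Fin N // P r} = #{r ∈ range N | P r} := by
  rw [Nat.card_eq_fintype_card, Fintype.card_subtype, ← card_map Fin.valEmbedding]
  congr 1
  ext r
  simp [Fin.exists_iff, and_comm]

lemma card_filter_div_eq_and_mod {N n j : ℕ} (hj : j < n) (P : ℕ → Prop) [DecidablePred P] :
    #{r ∈ range (n * N) | r / N = j ∧ P (r % N)} = #{r ∈ range N | P r} := by
  conv_rhs => rw [← card_map (addRightEmbedding (j * N))]
  congr 1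
  ext r
  simp only [mem_filter, mem_range, mem_map, addRightEmbedding_apply]
  constructor
  · rintro ⟨hr, rfl, hP⟩
    have hN : 0 < N := Nat.pos_of_mul_pos_left (Nat.zero_lt_of_lt hr)
    exact ⟨r % N, ⟨Nat.mod_lt r hN, hP⟩, Nat.mod_add_div' r N⟩
  · rintro ⟨r', ⟨hr', hP⟩, rfl⟩
    have hN : 0 < N := Nat.zero_lt_of_lt hr'
    refine ⟨by nlinarith, ?_, ?_⟩
    · rw [Nat.add_mul_div_right _ _ hN, Nat.div_eq_of_lt hr', zero_add]
    · rwa [Nat.add_mul_mod_self_right, Nat.mod_eq_of_lt hr']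

lemma card_filter_range_mul_div_eq {N n j : ℕ} (hj : j < n) :
    #{r ∈ range (n * N) | r / N = j} = N := by
  simpa using card_filter_div_eq_and_mod (N := N) hj (fun _ => True)

def columnCount (q m c : ℕ) (a : ZMod q) : ℕ :=
  #{r ∈ range (Nrows q m) | fractalEntry q m r c = some a}

variable {q : ℕ}

lemma columnCount_succ_zero [NeZero q] (m : ℕ) (a : ZMod q) :
    columnCount q (m + 1) 0 a = Nrows q m := by
  have hstripe : ∀ r ∈ range (q * Nrows q m),
      fractalEntry q (m + 1) r 0 = some a ↔ r / Nrows q m = a.val := by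
    intro r hr
    have hstripe_lt : r / Nrows q m < q :=
      Nat.div_lt_of_lt_mul (by rw [mul_comm]; simpa using hr)
    simp only [fractalEntry, if_true, Option.some_inj]
    constructor
    · rintro rfl
      exact (ZMod.val_cast_of_lt hstripe_lt).symm
    · intro h
      rw [h, ZMod.natCast_zmod_val]
  rw [columnCount, Nrows, filter_congr hstripe, card_filter_range_mul_div_eq (ZMod.val_lt a)]

lemma columnCount_succ_of_ne_zero {m c : ℕ} (hc : c ≠ 0) (hcm : c < Ncols q (m + 1))
    (a : ZMod q) :
    columnCount q (m + 1) c a = columnCount q m ((c - 1) % Ncols q m) a := by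
  have hblock : (c - 1) / Ncols q m < q := Nat.div_lt_of_lt_mul (by simp only [Ncols] at hcm; lia)
  have hstripe : ∀ r ∈ range (q * Nrows q m),
      fractalEntry q (m + 1) r c = some a ↔ r / Nrows q m = (c - 1) / Ncols q m ∧
        fractalEntry q m (r % Nrows q m) ((c - 1) % Ncols q m) = some a := by
    intro r _
    simp only [fractalEntry, hc, if_false]
    split_ifs with h <;> simp [h, Ne.symm]
  rw [columnCount, Nrows, filter_congr hstripe, card_filter_div_eq_and_mod hblock
    (fun r' => fractalEntry q m r' ((c - 1) % Ncols q m) = some a)]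
  rfl

theorem columnCount_eq [NeZero q] {m c : ℕ} (hc : c < Ncols q m) (a b : ZMod q) :
    columnCount q m c a = columnCount q m c b := by
  induction m generalizing c with
  | zero => simp [Ncols] at hc
  | succ m ih =>
    rcases eq_or_ne c 0 with rfl | hc0
    · rw [columnCount_succ_zero, columnCount_succ_zero]
    · have hNcols : 0 < Ncols q m := by simp only [Ncols] at hc; lia
      rw [columnCount_succ_of_ne_zero hc0 hc, columnCount_succ_of_ne_zero hc0 hc]
      exact ih (Nat.mod_lt _ hNcols)

lemma eq_pow_pred_of_mul_eq_pow {t k : ℕ} (hq : 2 ≤ q) (h : q * t = q ^ k) :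
    t = q ^ (k - 1) := by
  cases k with
  | zero =>
    have := Nat.eq_one_of_mul_eq_one_right (h.trans (pow_zero q))
    lia
  | succ k => exact Nat.eq_of_mul_eq_mul_left (by lia) (h.trans (pow_succ' q k))

theorem stmt8_general (q m : ℕ) (hq : 2 ≤ q) (c : Fin (Ncols q m)) :
    (∀ a b : ZMod q,
      Nat.card {r : Fin (Nrows q m) // fractalMatrix q m r c = some a} =
        Nat.card {r : Fin (Nrows q m) // fractalMatrix q m r c = some b}) ∧
    (∀ k : ℕ,
      Nat.card {r : Fin (Nrows q m) // (fractalMatrix q m r c).isSome} = q ^ k →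
      ∀ a : ZMod q,
        Nat.card {r : Fin (Nrows q m) // fractalMatrix q m r c = some a} = q ^ (k - 1)) := by
  have : NeZero q := ⟨by lia⟩
  have hcount (a : ZMod q) : Nat.card {r : Fin (Nrows q m) // fractalMatrix q m r c = some a} =
      columnCount q m c a :=
    natCard_fin_subtype_val (fun r => fractalEntry q m r c = some a)
  have hsize (a : ZMod q) :
      Nat.card {r : Fin (Nrows q m) // (fractalMatrix q m r c).isSome} =
        q * columnCount q m c a := by
    refine (natCard_fin_subtype_val (fun r => (fractalEntry q m r c).isSome)).trans ?_
    rw [card_filter_isSome]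
    change ∑ b, columnCount q m c b = _
    rw [sum_congr rfl fun b _ => columnCount_eq c.2 b a, sum_const, card_univ, ZMod.card,
      smul_eq_mul]
  refine ⟨fun a b => by rw [hcount, hcount, columnCount_eq c.2], fun k hk a => ?_⟩
  rw [hcount]
  exact eq_pow_pred_of_mul_eq_pow hq ((hsize a).symm.trans hk)

/-- Every column of `M_{q,m}` contains each value of `Z_q` the same number of times;
if its size (number of numerical entries) is `q^k`, each value occurs `q^(k-1)` times. -/
theorem stmt8 (q m : ℕ) (hq : 2 ≤ q) (hm : 1 ≤ m) (c : Fin (Ncols q m)) :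
    (∀ a b : ZMod q,
      Nat.card {r : Fin (Nrows q m) // fractalMatrix q m r c = some a} =
        Nat.card {r : Fin (Nrows q m) // fractalMatrix q m r c = some b}) ∧
    (∀ k : ℕ,
      Nat.card {r : Fin (Nrows q m) // (fractalMatrix q m r c).isSome} = q ^ k →
      ∀ a : ZMod q,
        Nat.card {r : Fin (Nrows q m) // fractalMatrix q m r c = some a} = q ^ (k - 1)) :=
  stmt8_general q m hq c
end

section
/- Let M be a star matrix of a partition of Z_q^n into subcubes of the same dimension, and suppose M contains a transfractal submatrix T. Then any two rows of M passing through T agree in every column outside T (all entries, numerical or star, coincide outside T). -/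
/-- A transfractal of the star matrix `M`: a submatrix (given by the injections `ρ` on rows
and `γ` on columns) which, up to these identifications, equals the fractal matrix `M_{q,l}`,
and such that every column of `M` through the submatrix has only stars outside its rows. -/
structure Transfractal (q : ℕ) {R : Type} {n : ℕ} (M : R → Fin n → Option (ZMod q))
    (l : ℕ) where
  ρ : Fin (Nrows q l) ↪ R
  γ : Fin (Ncols q l) ↪ Fin n
  eq_fractal : ∀ i j, M (ρ i) (γ j) = fractalMatrix q l i j
  stars_outside : ∀ j : Fin (Ncols q l), ∀ r : R, (∀ i, ρ i ≠ r) → M r (γ j) = none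

/-
Replace the entries of the columns `S` of `T` by stars. Take `y` in the masked subcube of a row
`ρ i₁`, overwrite it on `S` by the entries of another row `ρ i₂`, and let `r` be the row whose
subcube covers the result. A row outside `T` is all stars on `S`, so it would also meet the
subcube of `ρ i₁`; two rows of a fractal matrix always clash in some column, so `r = ρ i₂`.
Hence all rows of `T` have the same masked subcube, and for `q ≥ 2` a subcube determines its
star pattern.
-/
section Subcube

variable {q : ℕ} {C : Type}

def fillStars (p : C → Option (ZMod q)) (y : C → ZMod q) : C → ZMod q :=
  fun c => (p c).getD (y c)

open Classical in
noncomputable def starOn (S : Set C) (p : C → Option (ZMod q)) : C → Option (ZMod q) :=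
  fun c => if c ∈ S then none else p c

def Clash (p p' : C → Option (ZMod q)) (c : C) : Prop :=
  ∃ a a', p c = some a ∧ p' c = some a' ∧ a ≠ a'

theorem fillStars_mem_subcube (p : C → Option (ZMod q)) (y : C → ZMod q) :
    fillStars p y ∈ Subcube p := by
  intro c a ha
  simp [fillStars, ha]

theorem fillStars_apply_of_eq_none {p : C → Option (ZMod q)} {c : C} (hc : p c = none)
    (y : C → ZMod q) : fillStars p y c = y c := by
  simp [fillStars, hc]

theorem fillStars_apply_of_mem_subcube {p : C → Option (ZMod q)} {y : C → ZMod q}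
    (hy : y ∈ Subcube p) (c : C) : fillStars p y c = y c := by
  cases hpc : p c with
  | none => exact fillStars_apply_of_eq_none hpc y
  | some a => simp [fillStars, hpc, hy c a hpc]

theorem starOn_apply_of_mem {S : Set C} {c : C} (hc : c ∈ S) (p : C → Option (ZMod q)) :
    starOn S p c = none := by
  simp [starOn, hc]

theorem starOn_apply_of_notMem {S : Set C} {c : C} (hc : c ∉ S) (p : C → Option (ZMod q)) :
    starOn S p c = p c := by
  simp [starOn, hc]

theorem Subcube.eq_some_of_subset [Nontrivial (ZMod q)] {p p' : C → Option (ZMod q)}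
    (h : Subcube p ⊆ Subcube p') {c : C} {a : ZMod q} (hc : p' c = some a) :
    p c = some a := by
  cases hpc : p c with
  | some b => simpa [fillStars, hpc] using h (fillStars_mem_subcube p 0) c a hc
  | none =>
    classical
    obtain ⟨b, hb⟩ := exists_ne a
    have hmem : Function.update (fillStars p 0) c b ∈ Subcube p := by
      intro c' a' ha'
      rcases eq_or_ne c' c with rfl | hne
      · rw [hpc] at ha'; cases ha'
      · rw [Function.update_of_ne hne]
        exact fillStars_mem_subcube p 0 c' a' ha'
    exact absurd (by simpa using h hmem c a hc) hb

theorem Subcube.injective [Nontrivial (ZMod q)] :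
    Function.Injective (Subcube : (C → Option (ZMod q)) → Set (C → ZMod q)) := by
  intro p p' h
  funext c
  exact Option.ext fun a =>
    ⟨fun hc => Subcube.eq_some_of_subset h.ge hc, fun hc => Subcube.eq_some_of_subset h.le hc⟩

end Subcube

section Fractal

variable {q : ℕ}

theorem nrows_pos (hq : 0 < q) : ∀ l, 0 < Nrows q l
  | 0 => Nat.one_pos
  | l + 1 => Nat.mul_pos hq (nrows_pos hq l)

theorem fractalEntry_succ_zero_s11 (l r : ℕ) :
    fractalEntry q (l + 1) r 0 = some ((r / Nrows q l : ℕ) : ZMod q) := by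
  simp [fractalEntry]

theorem fractalEntry_succ_block_s11 {l c : ℕ} (hc : c < Ncols q l) (r : ℕ) :
    fractalEntry q (l + 1) r (1 + Ncols q l * (r / Nrows q l) + c) =
      fractalEntry q l (r % Nrows q l) c := by
  have hpos : 0 < Ncols q l := by omega
  have hshift : 1 + Ncols q l * (r / Nrows q l) + c - 1 = Ncols q l * (r / Nrows q l) + c := by
    omega
  rw [fractalEntry, if_neg (by omega), hshift, Nat.mul_add_div hpos,
    Nat.div_eq_of_lt hc, Nat.add_zero, if_pos rfl, Nat.mul_add_mod, Nat.mod_eq_of_lt hc]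

theorem block_lt_ncols_succ {l b c : ℕ} (hb : b < q) (hc : c < Ncols q l) :
    1 + Ncols q l * b + c < Ncols q (l + 1) := by
  have : Ncols q l * (b + 1) ≤ Ncols q l * q := Nat.mul_le_mul_left _ hb
  rw [Ncols, Nat.mul_comm q]
  rw [Nat.mul_succ] at this
  omega

theorem fractalEntry_clash : ∀ {l r r' : ℕ}, r < Nrows q l → r' < Nrows q l → r ≠ r' →
    ∃ c < Ncols q l, Clash (fractalEntry q l r) (fractalEntry q l r') c
  | 0, r, r', hr, hr', hne => by simp only [Nrows] at hr hr'; omega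
  | l + 1, r, r', hr, hr', hne => by
    rw [Nrows, Nat.mul_comm] at hr hr'
    have hq : 0 < q := Nat.pos_of_ne_zero (by rintro rfl; simp at hr)
    have hN := nrows_pos hq l
    have hbq : r / Nrows q l < q := Nat.div_lt_of_lt_mul hr
    have hbq' : r' / Nrows q l < q := Nat.div_lt_of_lt_mul hr'
    by_cases hb : r / Nrows q l = r' / Nrows q l
    · have hm : r % Nrows q l ≠ r' % Nrows q l := fun hm =>
        hne (by rw [← Nat.div_add_mod r (Nrows q l), ← Nat.div_add_mod r' (Nrows q l), hb, hm])
      obtain ⟨c, hc, a, a', ha, ha', haa'⟩ :=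
        fractalEntry_clash (Nat.mod_lt r hN) (Nat.mod_lt r' hN) hm
      refine ⟨1 + Ncols q l * (r / Nrows q l) + c, block_lt_ncols_succ hbq hc, a, a', ?_, ?_, haa'⟩
      · rwa [fractalEntry_succ_block_s11 hc]
      · rwa [hb, fractalEntry_succ_block_s11 hc]
    · refine ⟨0, by rw [Ncols]; omega, _, _, fractalEntry_succ_zero_s11 l r,
        fractalEntry_succ_zero_s11 l r', fun h => hb ?_⟩
      rwa [ZMod.natCast_eq_natCast_iff', Nat.mod_eq_of_lt hbq, Nat.mod_eq_of_lt hbq'] at h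

theorem fractalMatrix_clash {l : ℕ} {i i' : Fin (Nrows q l)} (h : i ≠ i') :
    ∃ j, Clash (fractalMatrix q l i) (fractalMatrix q l i') j := by
  obtain ⟨c, hc, hclash⟩ := fractalEntry_clash i.2 i'.2 (Fin.val_ne_of_ne h)
  exact ⟨⟨c, hc⟩, hclash⟩

end Fractal

section Partition

variable {q : ℕ} {R C ι : Type} {M : R → C → Option (ZMod q)}

theorem IsPartitionMatrix.subcube_starOn_subset (hM : IsPartitionMatrix q M) {S : Set C}
    {ρ : ι → R} (hstars : ∀ c ∈ S, ∀ r ∉ Set.range ρ, M r c = none)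
    (hclash : ∀ i i', i ≠ i' → ∃ c ∈ S, Clash (M (ρ i)) (M (ρ i')) c) (i₁ i₂ : ι) :
    Subcube (starOn S (M (ρ i₁))) ⊆ Subcube (starOn S (M (ρ i₂))) := by
  intro y hy
  set x' := fillStars (starOn Sᶜ (M (ρ i₂))) y
  have hx'_out : ∀ c ∉ S, x' c = y c := fun c hc =>
    fillStars_apply_of_eq_none (starOn_apply_of_mem (Set.mem_compl hc) _) y
  obtain ⟨r, hr⟩ := hM.2 x'
  by_cases hrT : r ∈ Set.range ρ
  · obtain ⟨i, rfl⟩ := hrT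
    have hi : i = i₂ := by
      by_contra hne
      obtain ⟨c, hcS, a, a', ha, ha', haa'⟩ := hclash i i₂ hne
      have hx'c : x' c = a' := fillStars_mem_subcube _ y c a'
        (by rwa [starOn_apply_of_notMem (not_not.2 hcS)])
      exact haa' ((hr c a ha).symm.trans hx'c)
    subst hi
    intro c a ha
    by_cases hcS : c ∈ S
    · rw [starOn_apply_of_mem hcS] at ha; cases ha
    · rw [starOn_apply_of_notMem hcS] at ha
      rw [← hx'_out c hcS]
      exact hr c a ha
  · exfalso
    set x := fillStars (M (ρ i₁)) y
    have hxr : x ∈ Subcube (M r) := by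
      intro c a ha
      have hcS : c ∉ S := fun hcS => by rw [hstars c hcS r hrT] at ha; cases ha
      have hxy : x c = y c := by
        rw [← fillStars_apply_of_mem_subcube hy c]
        simp only [x, fillStars, starOn_apply_of_notMem hcS]
      rw [hxy, ← hx'_out c hcS]
      exact hr c a ha
    have hdisj := hM.1 (ρ i₁) r (fun h => hrT ⟨i₁, h⟩)
    exact Set.eq_empty_iff_forall_notMem.1 hdisj x ⟨fillStars_mem_subcube _ y, hxr⟩

end Partition

theorem stmt11_general (q n m l : ℕ) (hq : 2 ≤ q)
    (M : Fin (q ^ m) → Fin n → Option (ZMod q))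
    (hpart : IsPartitionMatrix q M)
    (T : Transfractal q M l)
    (i i' : Fin (Nrows q l)) (c : Fin n) (hc : ∀ j, T.γ j ≠ c) :
    M (T.ρ i) c = M (T.ρ i') c := by
  have : Fact (1 < q) := ⟨hq⟩
  have hstars : ∀ c ∈ Set.range T.γ, ∀ r ∉ Set.range T.ρ, M r c = none := by
    rintro _ ⟨j, rfl⟩ r hr
    exact T.stars_outside j r fun i h => hr ⟨i, h⟩
  have hclash : ∀ i i', i ≠ i' → ∃ c ∈ Set.range T.γ, Clash (M (T.ρ i)) (M (T.ρ i')) c := by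
    intro i i' hne
    obtain ⟨j, hj⟩ := fractalMatrix_clash hne
    exact ⟨T.γ j, ⟨j, rfl⟩, by simpa only [Clash, T.eq_fractal] using hj⟩
  have hmasked : starOn (Set.range T.γ) (M (T.ρ i)) = starOn (Set.range T.γ) (M (T.ρ i')) :=
    Subcube.injective <| (hpart.subcube_starOn_subset hstars hclash i i').antisymm
      (hpart.subcube_starOn_subset hstars hclash i' i)
  have hcS : c ∉ Set.range T.γ := fun ⟨j, hj⟩ => hc j hj
  simpa only [starOn_apply_of_notMem hcS] using congrFun hmasked c

/-- If the star matrix `M` of a partition of `Z_q^n` into subcubes of the same dimension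
contains a transfractal `T`, then all rows of `M` passing through `T` coincide in every
column outside `T`. -/
theorem stmt11 (q n m l : ℕ) (hq : 2 ≤ q)
    (M : Fin (q ^ m) → Fin n → Option (ZMod q))
    (hpart : IsPartitionMatrix q M)
    (hrows : ∀ r, numCount (M r) = m)
    (T : Transfractal q M l)
    (i i' : Fin (Nrows q l)) (c : Fin n) (hc : ∀ j, T.γ j ≠ c) :
    M (T.ρ i) c = M (T.ρ i') c :=
  stmt11_general q n m l hq M hpart T i i' c hc
end

section
/- Let M be the star matrix of an A-primitive partition of Z_q^n into q^m subcubes of dimension n-m, let column i of M and value a ∈ Z_q be chosen, and let M' be the star matrix obtained by the bang operation on column i with value a. Then M' is the star matrix of an A-primitive partition into q^m subcubes of equal dimension; in particular M' has q^m rows and the total number of numerical entries of M' equals that of M (namely m·q^m). -/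
/-- Row index type of the matrix obtained by the bang of `M` at column `i` with value
`a`: rows with a star in column `i` survive, rows with value `a` in column `i` are
replaced by `q` copies, all other rows are deleted. -/
def BangRow {q : ℕ} {R : Type} {n : ℕ} (M : R → Fin n → Option (ZMod q))
    (i : Fin n) (a : ZMod q) : Type :=
  {r : R // M r i = none} ⊕ ({r : R // M r i = some a} × ZMod q)

/-- Column index type before removing all-star columns: the old columns other than `i`,
together with one new column for every row of `M` having value `a` in column `i`. -/
def BangCol0 {q : ℕ} {R : Type} {n : ℕ} (M : R → Fin n → Option (ZMod q))
    (i : Fin n) (a : ZMod q) : Type :=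
  {c : Fin n // c ≠ i} ⊕ {r : R // M r i = some a}

/-- The matrix after the bang, before removing all-star columns: old entries are kept,
and the new column attached to a split row contains each value of `Z_q` exactly once
within the block of its `q` copies, and stars elsewhere. -/
def bangPre {q : ℕ} {R : Type} [DecidableEq R] {n : ℕ} (M : R → Fin n → Option (ZMod q))
    (i : Fin n) (a : ZMod q) : BangRow M i a → BangCol0 M i a → Option (ZMod q)
  | Sum.inl ⟨r, _⟩, Sum.inl ⟨c, _⟩ => M r c
  | Sum.inl _, Sum.inr _ => none
  | Sum.inr (⟨r, _⟩, _), Sum.inl ⟨c, _⟩ => M r c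
  | Sum.inr (⟨r, _⟩, k), Sum.inr ⟨r', _⟩ => if r = r' then some k else none

/-- Columns of the banged matrix: the columns of `bangPre` that are not all-star. -/
def BangCol {q : ℕ} {R : Type} [DecidableEq R] {n : ℕ} (M : R → Fin n → Option (ZMod q))
    (i : Fin n) (a : ZMod q) : Type :=
  {c : BangCol0 M i a // ∃ ρ : BangRow M i a, (bangPre M i a ρ c).isSome}

/-- The star matrix obtained by the bang of `M` at column `i` with value `a`. -/
def bangMatrix {q : ℕ} {R : Type} [DecidableEq R] {n : ℕ} (M : R → Fin n → Option (ZMod q))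
    (i : Fin n) (a : ZMod q) : BangRow M i a → BangCol M i a → Option (ZMod q) :=
  fun ρ c => bangPre M i a ρ c.1


/-!
A point `y` of the banged cube lies over the point `bangLift y` of `Z_q^n`, whose coordinate
`i` is `a`. The banged rows whose subcubes contain `y` are the copies of the rows of `M` whose
subcubes contain `bangLift y`, and the `q` copies of a row with value `a` in column `i` are
told apart by their new column; hence the bang of a partition is a partition. Every banged row
has as many numerical entries as its parent row (the entry in column `i` is traded for one in
the new column), and counting points shows that a partition of a cube into subcubes of
codimension `m` has exactly `q^m` parts.
-/

section StarPattern

variable {q : ℕ} {C : Type} (p : C → Option (ZMod q))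

def subcubeEquiv : Subcube p ≃ ({c : C // p c = none} → ZMod q) where
  toFun x c := x.1 c.1
  invFun g := ⟨fun c => match h : p c with
      | none => g ⟨c, h⟩
      | some v => v,
    fun c v hv => by dsimp only; split <;> simp_all⟩
  left_inv x := by
    ext c
    dsimp only
    split
    · rfl
    · exact (x.2 c _ ‹_›).symm
  right_inv g := by
    ext c
    dsimp only
    split
    · rfl
    · simp_all [c.2]

variable [Finite C]

lemma card_subcube_mul_pow_numCount :
    Nat.card (Subcube p) * q ^ numCount p = q ^ Nat.card C := by
  have hsplit : Nat.card {c : C // p c = none} + numCount p = Nat.card C := by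
    rw [numCount, ← Nat.card_sum, ← Nat.card_congr (Equiv.sumCompl fun c => p c = none)]
    exact Nat.card_congr (Equiv.sumCongr (Equiv.refl _)
      (Equiv.subtypeEquivRight fun c => by simp [Option.isSome_iff_ne_none]))
  rw [Nat.card_congr (subcubeEquiv p), Nat.card_fun, Nat.card_zmod, ← pow_add, hsplit]

end StarPattern

namespace IsPartitionMatrix

variable {q : ℕ} {R C : Type} {P : R → C → Option (ZMod q)}

lemma sum_card_subcube_s13 [Fintype R] [Finite C] [NeZero q] (h : IsPartitionMatrix q P) :
    ∑ r, Nat.card (Subcube (P r)) = q ^ Nat.card C := by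
  have e : (Σ r, Subcube (P r)) ≃ (C → ZMod q) := by
    refine Equiv.ofBijective (fun s => s.2.1) ⟨?_, fun x => ?_⟩
    · rintro ⟨r, x, hx⟩ ⟨r', x', hx'⟩ (rfl : x = x')
      obtain rfl : r = r' := by
        by_contra hne
        exact Set.eq_empty_iff_forall_notMem.1 (h.1 r r' hne) x ⟨hx, hx'⟩
      rfl
    · obtain ⟨r, hr⟩ := h.2 x
      exact ⟨⟨r, x, hr⟩, rfl⟩
  have : Finite (C → ZMod q) := Pi.finite
  rw [← Nat.card_sigma, Nat.card_congr e, Nat.card_fun, Nat.card_zmod]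

lemma card_eq_pow [Finite R] [Finite C] [NeZero q] (h : IsPartitionMatrix q P) {m : ℕ}
    (hP : ∀ r, numCount (P r) = m) : Nat.card R = q ^ m := by
  have := Fintype.ofFinite R
  refine Nat.eq_of_mul_eq_mul_right (pow_pos (Nat.pos_of_neZero q) (Nat.card C)) ?_
  calc Nat.card R * q ^ Nat.card C
      = ∑ _r : R, q ^ Nat.card C := by simp [Nat.card_eq_fintype_card]
    _ = ∑ r, Nat.card (Subcube (P r)) * q ^ m :=
        Finset.sum_congr rfl fun r _ => by rw [← hP r, card_subcube_mul_pow_numCount]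
    _ = q ^ m * q ^ Nat.card C := by rw [← Finset.sum_mul, h.sum_card_subcube_s13, mul_comm]

end IsPartitionMatrix

section NumCount

variable {q : ℕ} {C : Type}

lemma numCount_subtype (p : C → Option (ZMod q)) {S : C → Prop}
    (hS : ∀ c, (p c).isSome → S c) : numCount (fun c : Subtype S => p c) = numCount p :=
  Nat.card_congr (Equiv.subtypeSubtypeEquivSubtype (hS _))

lemma numCount_sum {D : Type} [Finite C] [Finite D] (p : C ⊕ D → Option (ZMod q)) :
    numCount p = numCount (p ∘ Sum.inl) + numCount (p ∘ Sum.inr) := by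
  rw [numCount, Nat.card_congr Equiv.subtypeSum, Nat.card_sum]
  rfl

lemma numCount_eq_sum [Fintype C] (p : C → Option (ZMod q)) :
    numCount p = ∑ c, if (p c).isSome then 1 else 0 := by
  rw [numCount, Nat.card_eq_fintype_card, Fintype.card_subtype, Finset.card_filter]

lemma numCount_eq_numCount_ne_add_one [Fintype C] [DecidableEq C] (p : C → Option (ZMod q))
    {i : C} (hi : (p i).isSome) : numCount p = numCount (fun c : {c // c ≠ i} => p c) + 1 := by
  rw [numCount_eq_sum, numCount_eq_sum, Fintype.sum_eq_add_sum_subtype_ne _ i, if_pos hi,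
    add_comm]

end NumCount

section Bang

variable {q : ℕ} {R : Type} [DecidableEq R] {n : ℕ} {M : R → Fin n → Option (ZMod q)}
  {i : Fin n} {a : ZMod q}

def BangRow.parent : BangRow M i a → R :=
  Sum.elim Subtype.val fun s => s.1.1

instance [Finite R] [NeZero q] : Finite (BangRow M i a) := by
  unfold BangRow; infer_instance

instance [Finite R] : Finite (BangCol0 M i a) := by
  unfold BangCol0; infer_instance

instance [Finite R] : Finite (BangCol M i a) := by
  unfold BangCol; infer_instance

@[simp]
lemma bangPre_inl (ρ : BangRow M i a) (c : {c : Fin n // c ≠ i}) :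
    bangPre M i a ρ (Sum.inl c) = M ρ.parent c := by
  rcases ρ with _ | _ <;> rfl

@[simp]
lemma bangPre_inl_inr (r : {r : R // M r i = none}) (s : {r : R // M r i = some a}) :
    bangPre M i a (Sum.inl r) (Sum.inr s) = none := rfl

@[simp]
lemma bangPre_inr_inr (r : {r : R // M r i = some a}) (k : ZMod q)
    (s : {r : R // M r i = some a}) :
    bangPre M i a (Sum.inr (r, k)) (Sum.inr s) = if r.1 = s.1 then some k else none := rfl

lemma numCount_bangMatrix [Finite R] (ρ : BangRow M i a) :
    numCount (bangMatrix M i a ρ) = numCount (M ρ.parent) := by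
  refine (numCount_subtype (bangPre M i a ρ) fun c hc => ⟨ρ, hc⟩).trans ?_
  refine (numCount_sum (C := {c : Fin n // c ≠ i}) (D := {r : R // M r i = some a})
    (bangPre M i a ρ)).trans ?_
  rcases ρ with ⟨r, hr⟩ | ⟨⟨r, hr⟩, k⟩
  · change numCount (fun c : {c // c ≠ i} => M r c)
      + numCount (fun _ : {r // M r i = some a} => (none : Option (ZMod q))) = numCount (M r)
    rw [numCount_subtype (M r) fun c hc hci => by simp_all]
    simp [numCount]
  · change numCount (fun c : {c // c ≠ i} => M r c)
      + numCount (fun s : {r // M r i = some a} => if r = s.1 then some k else none)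
      = numCount (M r)
    have hnew : numCount (fun s : {r // M r i = some a} => if r = s.1 then some k else none)
        = 1 := by
      rw [numCount, Nat.card_eq_one_iff_exists]
      refine ⟨⟨⟨r, hr⟩, by simp⟩, ?_⟩
      rintro ⟨⟨s, hs⟩, h⟩
      obtain rfl : r = s := by by_contra hne; simp [hne] at h
      rfl
    rw [hnew, numCount_eq_numCount_ne_add_one (M r) (i := i) (by simp [hr])]

-- Old columns deleted as all-star are free in every subcube, so the `0` put there is irrelevant.
open Classical in
noncomputable def bangLift (y : BangCol M i a → ZMod q) (c : Fin n) : ZMod q :=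
  if hc : c = i then a
  else if h : ∃ ρ, (bangPre M i a ρ (Sum.inl ⟨c, hc⟩)).isSome then y ⟨Sum.inl ⟨c, hc⟩, h⟩
  else 0

lemma bangLift_self (y : BangCol M i a → ZMod q) : bangLift y i = a := by
  simp [bangLift]

lemma bangLift_of_ne (y : BangCol M i a → ZMod q) {c : Fin n} (hc : c ≠ i)
    (h : ∃ ρ, (bangPre M i a ρ (Sum.inl ⟨c, hc⟩)).isSome) :
    bangLift y c = y ⟨Sum.inl ⟨c, hc⟩, h⟩ := by
  rw [bangLift, dif_neg hc, dif_pos h]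

lemma bangLift_mem_subcube_parent {y : BangCol M i a → ZMod q} {ρ : BangRow M i a}
    (hy : y ∈ Subcube (bangMatrix M i a ρ)) : bangLift y ∈ Subcube (M ρ.parent) := by
  intro c v hv
  by_cases hc : c = i
  · subst hc
    rcases ρ with ⟨r, hr⟩ | ⟨⟨r, hr⟩, k⟩
    · simp_all [BangRow.parent]
    · simp_all [BangRow.parent, bangLift_self]
  · have hpre : bangPre M i a ρ (Sum.inl ⟨c, hc⟩) = some v := by simpa using hv
    have hcol : ∃ ρ, (bangPre M i a ρ (Sum.inl ⟨c, hc⟩)).isSome := ⟨ρ, by simp [hpre]⟩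
    rw [bangLift_of_ne y hc hcol]
    exact hy ⟨_, hcol⟩ v hpre

lemma exists_mem_subcube_bangMatrix {y : BangCol M i a → ZMod q} {r : R}
    (hx : bangLift y ∈ Subcube (M r)) : ∃ ρ, y ∈ Subcube (bangMatrix M i a ρ) := by
  have hcopied (ρ : BangRow M i a) (hρ : ρ.parent = r) (c : {c : Fin n // c ≠ i}) hcol v
      (hv : bangMatrix M i a ρ ⟨Sum.inl c, hcol⟩ = some v) : y ⟨Sum.inl c, hcol⟩ = v := by
    rw [← bangLift_of_ne y c.2 hcol]
    exact hx c v (by simpa [bangMatrix, hρ] using hv)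
  cases hri : M r i with
  | none =>
    refine ⟨Sum.inl ⟨r, hri⟩, ?_⟩
    rintro ⟨c | s, hcol⟩ v hv
    · exact hcopied _ rfl c hcol v hv
    · simp [bangMatrix] at hv
  | some b =>
    obtain rfl : b = a := by simpa [bangLift_self] using (hx i b hri).symm
    have hcol : ∃ ρ, (bangPre M i b ρ (Sum.inr ⟨r, hri⟩)).isSome :=
      ⟨Sum.inr (⟨r, hri⟩, 0), by simp⟩
    refine ⟨Sum.inr (⟨r, hri⟩, y ⟨Sum.inr ⟨r, hri⟩, hcol⟩), ?_⟩
    rintro ⟨c | s, hcol'⟩ v hv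
    · exact hcopied _ rfl c hcol' v hv
    · have hs : r = s.1 := by by_contra hne; simp [bangMatrix, hne] at hv
      obtain rfl : ⟨r, hri⟩ = s := Subtype.ext hs
      simpa [bangMatrix] using hv

lemma BangRow.eq_of_parent_eq {y : BangCol M i a → ZMod q} {ρ ρ' : BangRow M i a}
    (h : ρ.parent = ρ'.parent) (hy : y ∈ Subcube (bangMatrix M i a ρ))
    (hy' : y ∈ Subcube (bangMatrix M i a ρ')) : ρ = ρ' := by
  rcases ρ with ⟨r, hr⟩ | ⟨⟨r, hr⟩, k⟩ <;> rcases ρ' with ⟨r', hr'⟩ | ⟨⟨r', hr'⟩, k'⟩ <;>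
    obtain rfl : r = r' := h
  · rfl
  · cases hr.symm.trans hr'
  · cases hr.symm.trans hr'
  · have hcol : ∃ ρ, (bangPre M i a ρ (Sum.inr ⟨r, hr⟩)).isSome :=
      ⟨Sum.inr (⟨r, hr⟩, k), by simp⟩
    obtain rfl : k = k' :=
      (hy ⟨_, hcol⟩ k (by simp [bangMatrix])).symm.trans (hy' ⟨_, hcol⟩ k' (by simp [bangMatrix]))
    rfl

theorem IsPartitionMatrix.bangMatrix (h : IsPartitionMatrix q M) :
    IsPartitionMatrix q (bangMatrix M i a) := by
  refine ⟨fun ρ ρ' hne => Set.eq_empty_of_forall_notMem fun y ⟨hy, hy'⟩ => hne ?_,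
    fun y => ?_⟩
  · refine BangRow.eq_of_parent_eq (by_contra fun hpar => ?_) hy hy'
    exact Set.eq_empty_iff_forall_notMem.1 (h.1 _ _ hpar) _
      ⟨bangLift_mem_subcube_parent hy, bangLift_mem_subcube_parent hy'⟩
  · obtain ⟨r, hr⟩ := h.2 (bangLift y)
    exact exists_mem_subcube_bangMatrix hr

end Bang

theorem stmt13_general (q n m : ℕ) (hq : 2 ≤ q)
    (M : Fin (q ^ m) → Fin n → Option (ZMod q))
    (hpart : IsPartitionMatrix q M)
    (hrows : ∀ r, numCount (M r) = m)
    (i : Fin n) (a : ZMod q) :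
    IsPartitionMatrix q (bangMatrix M i a) ∧
    APrimitive (bangMatrix M i a) ∧
    Nat.card (BangRow M i a) = q ^ m ∧
    (∃ m' : ℕ, ∀ ρ : BangRow M i a, numCount (bangMatrix M i a ρ) = m') ∧
    (∑ᶠ ρ : BangRow M i a, numCount (bangMatrix M i a ρ)) = m * q ^ m := by
  have : NeZero q := ⟨by omega⟩
  have hbang : IsPartitionMatrix q (bangMatrix M i a) := hpart.bangMatrix
  have hbangRows (ρ : BangRow M i a) : numCount (bangMatrix M i a ρ) = m :=
    (numCount_bangMatrix ρ).trans (hrows _)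
  have hcard : Nat.card (BangRow M i a) = q ^ m := hbang.card_eq_pow hbangRows
  refine ⟨hbang, fun c => c.2, hcard, ⟨m, hbangRows⟩, ?_⟩
  have := Fintype.ofFinite (BangRow M i a)
  simp [finsum_eq_sum_of_fintype, hbangRows, ← Nat.card_eq_fintype_card, hcard, mul_comm]

/-- The bang of an A-primitive partition star matrix is again the star matrix of an
A-primitive partition into `q^m` subcubes of equal dimension; in particular it has `q^m`
rows and the same total number `m * q^m` of numerical entries. -/
theorem stmt13 (q n m : ℕ) (hq : 2 ≤ q) (hmn : m ≤ n)
    (M : Fin (q ^ m) → Fin n → Option (ZMod q))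
    (hpart : IsPartitionMatrix q M)
    (hrows : ∀ r, numCount (M r) = m)
    (hprim : APrimitive M)
    (i : Fin n) (a : ZMod q) :
    IsPartitionMatrix q (bangMatrix M i a) ∧
    APrimitive (bangMatrix M i a) ∧
    Nat.card (BangRow M i a) = q ^ m ∧
    (∃ m' : ℕ, ∀ ρ : BangRow M i a, numCount (bangMatrix M i a ρ) = m') ∧
    (∑ᶠ ρ : BangRow M i a, numCount (bangMatrix M i a ρ)) = m * q ^ m :=
  stmt13_general q n m hq M hpart hrows i a
end

section
/- Applying any bang operation to a fractal matrix M_{q,m} (m ≥ 1) yields a matrix that is again, up to permutation of rows and columns, the fractal matrix M_{q,m}; in particular the number of columns does not change, so fractal matrices are non-expandable. -/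
/-!
`M_{q,m+1}` is the stripe matrix of `M_{q,m}`: stripe `b` carries `b` in the first column and a
copy of `M_{q,m}` in the `b`-th column block. Banging the first column at `a` keeps only stripe
`a` and splits each of its rows into `q` copies with a fresh column; splitting commutes with
striping, so by induction the split of `M_{q,m}` is `M_{q,m+1}` again. Banging a column `j` of
block `b₀` leaves the other stripes untouched and acts on block `b₀` as a bang of `M_{q,m}`,
which by induction is `M_{q,m}` again, so the whole matrix is again the stripe matrix of `M_{q,m}`.
-/

def neProdSumEquiv {α : Type} [DecidableEq α] (a₀ : α) (β : Type) :
    ({a // a ≠ a₀} × β) ⊕ β ≃ α × β where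
  toFun
    | .inl (a, b) => (a, b)
    | .inr b => (a₀, b)
  invFun p := if h : p.1 = a₀ then .inr p.2 else .inl (⟨p.1, h⟩, p.2)
  left_inv := by rintro (⟨⟨a, h⟩, b⟩ | b) <;> simp [*]
  right_inv := by rintro ⟨a, b⟩; by_cases h : a = a₀ <;> simp [h]

theorem ZMod.finEquiv_symm_val (q : ℕ) [NeZero q] (b : ZMod q) :
    (((ZMod.finEquiv q).symm b : Fin q) : ℕ) = b.val := by
  cases q with
  | zero => exact absurd rfl (NeZero.ne 0)
  | succ n => rfl

def zmodProdFinEquiv (q n : ℕ) [NeZero q] : ZMod q × Fin n ≃ Fin (q * n) :=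
  ((ZMod.finEquiv q).symm.toEquiv.prodCongr (.refl _)).trans finProdFinEquiv

@[simp] theorem zmodProdFinEquiv_val (q n : ℕ) [NeZero q] (b : ZMod q) (s : Fin n) :
    (zmodProdFinEquiv q n (b, s) : ℕ) = s + n * b.val := by
  simp [zmodProdFinEquiv, ZMod.finEquiv_symm_val]

def unitSumZModProdFinEquiv (q n : ℕ) [NeZero q] : Unit ⊕ ZMod q × Fin n ≃ Fin (1 + q * n) :=
  (finOneEquiv.symm.sumCongr (zmodProdFinEquiv q n)).trans finSumFinEquiv

@[simp] theorem unitSumZModProdFinEquiv_inl_val (q n : ℕ) [NeZero q] (u : Unit) :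
    (unitSumZModProdFinEquiv q n (.inl u) : ℕ) = 0 :=
  rfl

@[simp] theorem unitSumZModProdFinEquiv_inr_val (q n : ℕ) [NeZero q] (b : ZMod q) (t : Fin n) :
    (unitSumZModProdFinEquiv q n (.inr (b, t)) : ℕ) = 1 + (t + n * b.val) := by
  simp [unitSumZModProdFinEquiv]

namespace StarMatrix

variable {q : ℕ} {R C R' C' R'' C'' : Type}

def Isomorphic (M : R → C → Option (ZMod q)) (M' : R' → C' → Option (ZMod q)) : Prop :=
  ∃ (e : R ≃ R') (f : C ≃ C'), ∀ r c, M r c = M' (e r) (f c)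

theorem Isomorphic.symm {M : R → C → Option (ZMod q)} {M' : R' → C' → Option (ZMod q)}
    (h : Isomorphic M M') : Isomorphic M' M := by
  obtain ⟨e, f, h⟩ := h
  exact ⟨e.symm, f.symm, fun r c => by simp [h]⟩

theorem Isomorphic.trans {M : R → C → Option (ZMod q)} {M' : R' → C' → Option (ZMod q)}
    {M'' : R'' → C'' → Option (ZMod q)} (h : Isomorphic M M') (h' : Isomorphic M' M'') :
    Isomorphic M M'' := by
  obtain ⟨e, f, h⟩ := h
  obtain ⟨e', f', h'⟩ := h'
  exact ⟨e.trans e', f.trans f', fun r c => (h r c).trans (h' _ _)⟩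

theorem APrimitive.of_isomorphic {M : R → C → Option (ZMod q)} {M' : R' → C' → Option (ZMod q)}
    (h : Isomorphic M M') (hM' : APrimitive M') : APrimitive M := by
  obtain ⟨e, f, h⟩ := h
  intro c
  obtain ⟨r, hr⟩ := hM' (f c)
  exact ⟨e.symm r, by simpa [h] using hr⟩

/- `BangRow`, `BangCol0`, `bangPre`, `BangCol`, `bangMatrix` for an arbitrary column type: the
stripe decomposition of `M_{q,m+1}` has columns `Unit ⊕ ZMod q × Fin _`. -/
namespace Bang

abbrev Row (M : R → C → Option (ZMod q)) (i : C) (a : ZMod q) : Type :=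
  {r : R // M r i = none} ⊕ ({r : R // M r i = some a} × ZMod q)

abbrev Col₀ (M : R → C → Option (ZMod q)) (i : C) (a : ZMod q) : Type :=
  {c : C // c ≠ i} ⊕ {r : R // M r i = some a}

def entry [DecidableEq R] (M : R → C → Option (ZMod q)) (i : C) (a : ZMod q) :
    Row M i a → Col₀ M i a → Option (ZMod q)
  | .inl ⟨r, _⟩, .inl ⟨c, _⟩ => M r c
  | .inl _, .inr _ => none
  | .inr (⟨r, _⟩, _), .inl ⟨c, _⟩ => M r c
  | .inr (⟨r, _⟩, k), .inr ⟨r', _⟩ => if r = r' then some k else none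

abbrev Col [DecidableEq R] (M : R → C → Option (ZMod q)) (i : C) (a : ZMod q) : Type :=
  {c : Col₀ M i a // ∃ ρ, (entry M i a ρ c).isSome}

end Bang

def bang [DecidableEq R] (M : R → C → Option (ZMod q)) (i : C) (a : ZMod q) :
    Bang.Row M i a → Bang.Col M i a → Option (ZMod q) :=
  fun ρ c => Bang.entry M i a ρ c.1

theorem bangPre_eq_entry {n : ℕ} [DecidableEq R] (M : R → Fin n → Option (ZMod q)) (i : Fin n)
    (a : ZMod q) : bangPre M i a = Bang.entry M i a := by
  funext ρ c
  rcases ρ with ⟨r, hr⟩ | ⟨⟨r, hr⟩, k⟩ <;> rcases c with ⟨c, hc⟩ | ⟨r', hr'⟩ <;> rfl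

theorem bangMatrix_isomorphic_bang {n : ℕ} [DecidableEq R] (M : R → Fin n → Option (ZMod q))
    (i : Fin n) (a : ZMod q) : Isomorphic (bangMatrix M i a) (bang M i a) :=
  ⟨.refl _, .subtypeEquivRight fun c => by rw [bangPre_eq_entry]; exact Iff.rfl, fun ρ c => by
    simp only [bangMatrix, bang, bangPre_eq_entry]; rfl⟩

theorem bang_isomorphic_of_injective [DecidableEq R] {M : R → C → Option (ZMod q)} {i : C}
    {a : ZMod q} {M' : R' → C' → Option (ZMod q)} (hM' : APrimitive M')
    (e : Bang.Row M i a ≃ R') {g : C' → Bang.Col₀ M i a} (hg : Function.Injective g)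
    (hentry : ∀ ρ c, Bang.entry M i a ρ (g c) = M' (e ρ) c)
    (hrange : ∀ ρ c₀, (Bang.entry M i a ρ c₀).isSome → c₀ ∈ Set.range g) :
    Isomorphic (bang M i a) M' := by
  let φ : C' → Bang.Col M i a := fun c =>
    ⟨g c, by obtain ⟨r, hr⟩ := hM' c; exact ⟨e.symm r, by simpa [hentry] using hr⟩⟩
  have hφ : Function.Bijective φ := by
    refine ⟨fun c c' h => hg (congrArg Subtype.val h), ?_⟩
    rintro ⟨c₀, ρ, hρ⟩
    obtain ⟨c, rfl⟩ := hrange ρ c₀ hρ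
    exact ⟨c, rfl⟩
  refine ⟨e, (Equiv.ofBijective φ hφ).symm, fun ρ c => ?_⟩
  conv_lhs => rw [← (Equiv.ofBijective φ hφ).apply_symm_apply c]
  exact hentry ρ _

section congr

variable [DecidableEq R] [DecidableEq R'] {M : R → C → Option (ZMod q)}
  {M' : R' → C' → Option (ZMod q)}

def Bang.rowCongr (e : R ≃ R') (f : C ≃ C') (h : ∀ r c, M r c = M' (e r) (f c)) (i : C)
    (a : ZMod q) : Bang.Row M i a ≃ Bang.Row M' (f i) a := by
  refine .sumCongr (.subtypeEquiv e ?_) (.prodCongr (.subtypeEquiv e ?_) (.refl _)) <;>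
    simp [h]

def Bang.col₀Congr (e : R ≃ R') (f : C ≃ C') (h : ∀ r c, M r c = M' (e r) (f c)) (i : C)
    (a : ZMod q) : Bang.Col₀ M i a ≃ Bang.Col₀ M' (f i) a := by
  refine .sumCongr (.subtypeEquiv f ?_) (.subtypeEquiv e ?_) <;> simp [h]

theorem Bang.entry_congr (e : R ≃ R') (f : C ≃ C') (h : ∀ r c, M r c = M' (e r) (f c)) (i : C)
    (a : ZMod q) (ρ : Bang.Row M i a) (c : Bang.Col₀ M i a) :
    Bang.entry M i a ρ c =
      Bang.entry M' (f i) a (rowCongr e f h i a ρ) (col₀Congr e f h i a c) := by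
  rcases ρ with ⟨r, hr⟩ | ⟨⟨r, hr⟩, k⟩ <;> rcases c with ⟨c, hc⟩ | ⟨r', hr'⟩
  · exact h r c
  · rfl
  · exact h r c
  · simp [rowCongr, col₀Congr, entry, e.injective.eq_iff]

theorem bang_congr (e : R ≃ R') (f : C ≃ C') (h : ∀ r c, M r c = M' (e r) (f c)) (i : C)
    (a : ZMod q) : Isomorphic (bang M i a) (bang M' (f i) a) := by
  refine bang_isomorphic_of_injective (fun c => c.2) (Bang.rowCongr e f h i a)
    (g := fun c => (Bang.col₀Congr e f h i a).symm c.1)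
    (fun c c' hc => Subtype.ext ((Bang.col₀Congr e f h i a).symm.injective hc))
    (fun ρ c => ?_) (fun ρ c₀ hρ => ?_)
  · simp [bang, Bang.entry_congr e f h i a]
  · refine ⟨⟨Bang.col₀Congr e f h i a c₀, Bang.rowCongr e f h i a ρ, ?_⟩, by simp⟩
    rwa [← Bang.entry_congr]

end congr

def stripe (N : R → C → Option (ZMod q)) : ZMod q × R → Unit ⊕ ZMod q × C → Option (ZMod q)
  | (b, _), .inl _ => some b
  | (b, r), .inr (b', c) => if b' = b then N r c else none

/-- What banging the first column of `stripe N` produces. -/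
def splitRows [DecidableEq R] (N : R → C → Option (ZMod q)) :
    R × ZMod q → C ⊕ R → Option (ZMod q)
  | (r, _), .inl c => N r c
  | (r, k), .inr r' => if r = r' then some k else none

section stripe

variable {N : R → C → Option (ZMod q)}

@[simp] theorem stripe_inl (b : ZMod q) (r : R) (u : Unit) : stripe N (b, r) (.inl u) = some b :=
  rfl

@[simp] theorem stripe_inr (b b' : ZMod q) (r : R) (c : C) :
    stripe N (b, r) (.inr (b', c)) = if b' = b then N r c else none :=
  rfl

theorem stripe_inr_eq_some {b b' : ZMod q} {r : R} {c : C} {x : ZMod q}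
    (h : stripe N (b, r) (.inr (b', c)) = some x) : b = b' ∧ N r c = some x := by
  by_cases hb : b' = b
  · subst hb; simpa using h
  · simp [hb] at h

@[simp] theorem splitRows_inl [DecidableEq R] (r : R) (k : ZMod q) (c : C) :
    splitRows N (r, k) (.inl c) = N r c :=
  rfl

@[simp] theorem splitRows_inr [DecidableEq R] (r r' : R) (k : ZMod q) :
    splitRows N (r, k) (.inr r') = if r = r' then some k else none :=
  rfl

theorem Isomorphic.stripe {N' : R' → C' → Option (ZMod q)} (h : Isomorphic N N') :
    Isomorphic (stripe N) (stripe N') := by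
  obtain ⟨e, f, h⟩ := h
  refine ⟨.prodCongr (.refl _) e, .sumCongr (.refl _) (.prodCongr (.refl _) f), ?_⟩
  rintro ⟨b, r⟩ (u | ⟨b', c⟩) <;> simp [h]

theorem Isomorphic.splitRows [DecidableEq R] [DecidableEq R'] {N' : R' → C' → Option (ZMod q)}
    (h : Isomorphic N N') : Isomorphic (splitRows N) (splitRows N') := by
  obtain ⟨e, f, h⟩ := h
  refine ⟨.prodCongr e (.refl _), .sumCongr f e, ?_⟩
  rintro ⟨r, k⟩ (c | r') <;> simp [h, e.injective.eq_iff]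

theorem splitRows_stripe_isomorphic [DecidableEq R] :
    Isomorphic (splitRows (stripe N)) (stripe (splitRows N)) := by
  refine ⟨.prodAssoc _ _ _,
    (Equiv.sumAssoc _ _ _).trans (.sumCongr (.refl _) (Equiv.prodSumDistrib _ _ _).symm), ?_⟩
  rintro ⟨⟨b, r⟩, k⟩ ((u | ⟨b', c⟩) | ⟨b', r'⟩)
  · rfl
  · rfl
  · by_cases hb : b = b' <;> simp [Prod.ext_iff, hb, eq_comm]

theorem splitRows_isomorphic_stripe_of_isEmpty [DecidableEq R] [Unique R] [IsEmpty C] :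
    Isomorphic (splitRows N) (stripe N) := by
  refine ⟨.prodComm _ _, (Equiv.sumCongr (.equivOfIsEmpty C (ZMod q × C)) (.equivPUnit R)).trans
    (Equiv.sumComm _ _), ?_⟩
  rintro ⟨r, k⟩ (c | r')
  · exact isEmptyElim c
  · simp [Subsingleton.elim r r']

theorem APrimitive.stripe [Nonempty R] (hN : APrimitive N) : APrimitive (stripe N) := by
  rintro (u | ⟨b, c⟩)
  · exact ⟨(0, Classical.arbitrary R), rfl⟩
  · obtain ⟨r, hr⟩ := hN c
    exact ⟨(b, r), by simpa using hr⟩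

theorem APrimitive.splitRows [DecidableEq R] (hN : APrimitive N) : APrimitive (splitRows N) := by
  rintro (c | r)
  · obtain ⟨r, hr⟩ := hN c
    exact ⟨(r, 0), hr⟩
  · exact ⟨(r, 0), by simp⟩

end stripe

section bangStripe

variable [DecidableEq R] {N : R → C → Option (ZMod q)}

def Bang.stripeInlRowEquiv (a : ZMod q) : Bang.Row (stripe N) (.inl ()) a ≃ R × ZMod q where
  toFun
    | .inl ⟨(b, _), h⟩ => (Option.some_ne_none b h).elim
    | .inr (⟨(_, r), _⟩, k) => (r, k)
  invFun p := .inr (⟨(a, p.1), rfl⟩, p.2)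
  left_inv := by
    rintro (⟨⟨b, r⟩, h⟩ | ⟨⟨⟨b, r⟩, h⟩, k⟩)
    · exact (Option.some_ne_none b h).elim
    · obtain rfl : b = a := by simpa using h
      rfl
  right_inv _ := rfl

theorem bang_stripe_inl_isomorphic_splitRows (hN : APrimitive N) (a : ZMod q) :
    Isomorphic (bang (stripe N) (.inl ()) a) (splitRows N) := by
  let g : C ⊕ R → Bang.Col₀ (stripe N) (.inl ()) a
    | .inl c => .inl ⟨.inr (a, c), Sum.inr_ne_inl⟩
    | .inr r => .inr ⟨(a, r), rfl⟩
  have hg : Function.Injective g := by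
    rintro (c | r) (c' | r') h <;> simp_all [g, Subtype.ext_iff]
  refine bang_isomorphic_of_injective (APrimitive.splitRows hN) (Bang.stripeInlRowEquiv a) hg ?_ ?_
  · intro ρ c
    obtain ⟨⟨r, k⟩, rfl⟩ := (Bang.stripeInlRowEquiv a).symm.surjective ρ
    rcases c with c | r' <;> simp [g, Bang.stripeInlRowEquiv, Bang.entry]
  · intro ρ c₀ hρ
    obtain ⟨⟨r, k⟩, rfl⟩ := (Bang.stripeInlRowEquiv a).symm.surjective ρ
    rcases c₀ with ⟨_ | ⟨b, c⟩, hc⟩ | ⟨⟨b, r'⟩, h⟩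
    · exact absurd rfl hc
    · obtain rfl : b = a := by
        by_contra hb
        simp [Bang.stripeInlRowEquiv, Bang.entry, hb] at hρ
      exact ⟨.inl c, rfl⟩
    · obtain rfl : b = a := by simpa using h
      exact ⟨.inr r', rfl⟩

variable (b₀ : ZMod q) (j : C) (a : ZMod q)

def Bang.stripeRowEquiv :
    Bang.Row (stripe N) (.inr (b₀, j)) a ≃ ({b // b ≠ b₀} × R) ⊕ Bang.Row N j a where
  toFun
    | .inl ⟨(b, r), h⟩ =>
        if hb : b = b₀ then .inr (.inl ⟨r, by simpa [hb] using h⟩) else .inl (⟨b, hb⟩, r)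
    | .inr (⟨(_, r), h⟩, k) => .inr (.inr (⟨r, (stripe_inr_eq_some h).2⟩, k))
  invFun
    | .inl (⟨b, hb⟩, r) => .inl ⟨(b, r), by simp [Ne.symm hb]⟩
    | .inr (.inl ⟨r, hr⟩) => .inl ⟨(b₀, r), by simpa⟩
    | .inr (.inr (⟨r, hr⟩, k)) => .inr (⟨(b₀, r), by simpa⟩, k)
  left_inv := by
    rintro (⟨⟨b, r⟩, h⟩ | ⟨⟨⟨b, r⟩, h⟩, k⟩)
    · by_cases hb : b = b₀
      · subst hb; simp
      · simp [hb]
    · obtain rfl := (stripe_inr_eq_some h).1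
      rfl
  right_inv := by
    rintro (⟨⟨b, hb⟩, r⟩ | ⟨r, hr⟩ | ⟨⟨r, hr⟩, k⟩) <;> simp [*]

def Bang.stripeCol₀Equiv :
    Bang.Col₀ (stripe N) (.inr (b₀, j)) a ≃ Unit ⊕ ({b // b ≠ b₀} × C) ⊕ Bang.Col₀ N j a where
  toFun
    | .inl ⟨.inl u, _⟩ => .inl u
    | .inl ⟨.inr (b, c), h⟩ =>
        if hb : b = b₀ then .inr (.inr (.inl ⟨c, by rintro rfl; exact h (by rw [hb])⟩))
        else .inr (.inl (⟨b, hb⟩, c))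
    | .inr ⟨(_, r), h⟩ => .inr (.inr (.inr ⟨r, (stripe_inr_eq_some h).2⟩))
  invFun
    | .inl u => .inl ⟨.inl u, Sum.inl_ne_inr⟩
    | .inr (.inl (⟨b, hb⟩, c)) => .inl ⟨.inr (b, c), by simp [hb]⟩
    | .inr (.inr (.inl ⟨c, hc⟩)) => .inl ⟨.inr (b₀, c), by simp [hc]⟩
    | .inr (.inr (.inr ⟨r, hr⟩)) => .inr ⟨(b₀, r), by simpa⟩
  left_inv := by
    rintro (⟨_ | ⟨b, c⟩, h⟩ | ⟨⟨b, r⟩, h⟩)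
    · rfl
    · by_cases hb : b = b₀
      · subst hb; simp
      · simp [hb]
    · obtain rfl := (stripe_inr_eq_some h).1
      rfl
  right_inv := by
    rintro (u | ⟨⟨b, hb⟩, c⟩ | ⟨c, hc⟩ | ⟨r, hr⟩) <;> simp [*]

theorem Bang.entry_stripe_block (ρ : Bang.Row N j a) (x : Bang.Col₀ N j a) :
    Bang.entry (stripe N) (.inr (b₀, j)) a ((stripeRowEquiv b₀ j a).symm (.inr ρ))
      ((stripeCol₀Equiv b₀ j a).symm (.inr (.inr x))) = Bang.entry N j a ρ x := by
  rcases ρ with ⟨r, hr⟩ | ⟨⟨r, hr⟩, k⟩ <;> rcases x with ⟨c, hc⟩ | ⟨r', hr'⟩ <;>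
    simp [stripeRowEquiv, stripeCol₀Equiv, entry]

theorem Bang.entry_stripe_offBlock (b : {b // b ≠ b₀}) (r : R) (x : Bang.Col₀ N j a) :
    Bang.entry (stripe N) (.inr (b₀, j)) a ((stripeRowEquiv b₀ j a).symm (.inl (b, r)))
      ((stripeCol₀Equiv b₀ j a).symm (.inr (.inr x))) = none := by
  obtain ⟨b, hb⟩ := b
  rcases x with ⟨c, hc⟩ | ⟨r', hr'⟩ <;> simp [stripeRowEquiv, stripeCol₀Equiv, entry, Ne.symm hb]

/- The rows and columns of the blocks `b ≠ b₀` are untouched, while block `b₀` becomes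
`bang N j a`, which the isomorphism `h` identifies with `N`. -/
theorem bang_stripe_inr_isomorphic_stripe [Nonempty R] (hN : APrimitive N)
    (h : Isomorphic (bang N j a) N) :
    Isomorphic (bang (stripe N) (.inr (b₀, j)) a) (stripe N) := by
  obtain ⟨e, f, hef⟩ := h
  refine bang_isomorphic_of_injective (APrimitive.stripe hN)
    ((Bang.stripeRowEquiv b₀ j a).trans ((Equiv.sumCongr (.refl _) e).trans (neProdSumEquiv b₀ R)))
    (g := (Bang.stripeCol₀Equiv b₀ j a).symm ∘
      Sum.map id (Sum.map id (Subtype.val ∘ f.symm) ∘ (neProdSumEquiv b₀ C).symm)) ?_ ?_ ?_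
  · exact (Equiv.injective _).comp (Sum.map_injective.2 ⟨Function.injective_id,
      (Sum.map_injective.2 ⟨Function.injective_id, Subtype.val_injective.comp f.symm.injective⟩).comp
        (Equiv.injective _)⟩)
  · intro ρ c
    obtain ⟨x, rfl⟩ := (Bang.stripeRowEquiv b₀ j a).symm.surjective ρ
    rcases x with ⟨⟨b, hb⟩, r⟩ | ρ <;> rcases c with u | ⟨b', c⟩
    · simp [Bang.stripeRowEquiv, Bang.stripeCol₀Equiv, neProdSumEquiv, Bang.entry, hb]
    · by_cases hb' : b' = b₀
      · subst hb'; simp [Bang.entry_stripe_offBlock, neProdSumEquiv, Ne.symm hb]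
      · simp [Bang.stripeRowEquiv, Bang.stripeCol₀Equiv, neProdSumEquiv, Bang.entry, hb, hb']
    · rcases ρ with ⟨r, hr⟩ | ⟨⟨r, hr⟩, k⟩ <;>
        simp [Bang.stripeRowEquiv, Bang.stripeCol₀Equiv, neProdSumEquiv, Bang.entry]
    · by_cases hb' : b' = b₀
      · subst hb'; simpa [Bang.entry_stripe_block, neProdSumEquiv, bang] using hef ρ (f.symm c)
      · rcases ρ with ⟨r, hr⟩ | ⟨⟨r, hr⟩, k⟩ <;>
          simp [Bang.stripeRowEquiv, Bang.stripeCol₀Equiv, neProdSumEquiv, Bang.entry, hb']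
  · intro ρ c₀ hρ
    obtain ⟨y, rfl⟩ := (Bang.stripeCol₀Equiv b₀ j a).symm.surjective c₀
    rcases y with u | ⟨⟨b, hb⟩, c⟩ | x
    · exact ⟨.inl u, rfl⟩
    · exact ⟨.inr (b, c), by simp [neProdSumEquiv, hb]⟩
    · obtain ⟨⟨b, r⟩ | ρ, rfl⟩ := (Bang.stripeRowEquiv b₀ j a).symm.surjective ρ
      · simp [Bang.entry_stripe_offBlock] at hρ
      · rw [Bang.entry_stripe_block] at hρ
        exact ⟨.inr (b₀, f ⟨x, ρ, hρ⟩), by simp [neProdSumEquiv]⟩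

end bangStripe

section fractal

theorem Nrows_pos (hq : 0 < q) (m : ℕ) : 0 < Nrows q m := by
  induction m with
  | zero => exact Nat.one_pos
  | succ m ih => exact Nat.mul_pos hq ih

theorem fractalEntry_succ_zero (q m r : ℕ) :
    fractalEntry q (m + 1) r 0 = some ((r / Nrows q m : ℕ) : ZMod q) := by
  simp [fractalEntry]

theorem fractalEntry_succ_block {m s t b b' : ℕ} (hs : s < Nrows q m) (ht : t < Ncols q m) :
    fractalEntry q (m + 1) (s + Nrows q m * b) (1 + (t + Ncols q m * b')) =
      if b' = b then fractalEntry q m s t else none := by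
  have hr : 0 < Nrows q m := by omega
  have hc : 0 < Ncols q m := by omega
  simp [fractalEntry, Nat.add_mul_div_left _ _ hr, Nat.add_mul_div_left _ _ hc,
    Nat.div_eq_of_lt hs, Nat.div_eq_of_lt ht, Nat.mod_eq_of_lt hs, Nat.mod_eq_of_lt ht]

theorem stripe_fractalMatrix_isomorphic (hq : 0 < q) (m : ℕ) :
    Isomorphic (stripe (fractalMatrix q m)) (fractalMatrix q (m + 1)) := by
  have : NeZero q := ⟨hq.ne'⟩
  refine ⟨zmodProdFinEquiv q (Nrows q m), unitSumZModProdFinEquiv q (Ncols q m), ?_⟩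
  rintro ⟨b, s⟩ (u | ⟨b', t⟩)
  · erw [fractalMatrix, zmodProdFinEquiv_val, unitSumZModProdFinEquiv_inl_val,
      fractalEntry_succ_zero]
    simp [Nat.add_mul_div_left _ _ (Nrows_pos hq m), Nat.div_eq_of_lt s.2]
  · erw [fractalMatrix, zmodProdFinEquiv_val, unitSumZModProdFinEquiv_inr_val,
      fractalEntry_succ_block s.2 t.2]
    simp [(ZMod.val_injective q).eq_iff, fractalMatrix]

theorem splitRows_fractalMatrix_isomorphic (hq : 0 < q) (m : ℕ) :
    Isomorphic (splitRows (fractalMatrix q m)) (fractalMatrix q (m + 1)) := by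
  induction m with
  | zero =>
    have : Unique (Fin (Nrows q 0)) := inferInstanceAs (Unique (Fin 1))
    have : IsEmpty (Fin (Ncols q 0)) := inferInstanceAs (IsEmpty (Fin 0))
    exact splitRows_isomorphic_stripe_of_isEmpty.trans (stripe_fractalMatrix_isomorphic hq 0)
  | succ m ih =>
    exact (stripe_fractalMatrix_isomorphic hq m).symm.splitRows |>.trans
      splitRows_stripe_isomorphic |>.trans ih.stripe |>.trans
      (stripe_fractalMatrix_isomorphic hq (m + 1))

theorem aPrimitive_fractalMatrix (hq : 0 < q) (m : ℕ) : APrimitive (fractalMatrix q m) := by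
  induction m with
  | zero => exact fun c => c.elim0
  | succ m ih =>
    have : Nonempty (Fin (Nrows q m)) := ⟨⟨0, Nrows_pos hq m⟩⟩
    exact APrimitive.of_isomorphic (stripe_fractalMatrix_isomorphic hq m).symm
      (APrimitive.stripe ih)

theorem bang_fractalMatrix_isomorphic (hq : 0 < q) (m : ℕ) (i : Fin (Ncols q m)) (a : ZMod q) :
    Isomorphic (bang (fractalMatrix q m) i a) (fractalMatrix q m) := by
  induction m with
  | zero => exact i.elim0
  | succ m ih =>
    obtain ⟨e, f, h⟩ := (stripe_fractalMatrix_isomorphic hq m).symm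
    refine (bang_congr e f h i a).trans ?_
    have : Nonempty (Fin (Nrows q m)) := ⟨⟨0, Nrows_pos hq m⟩⟩
    rcases f i with ⟨⟩ | ⟨b, j⟩
    · exact (bang_stripe_inl_isomorphic_splitRows (aPrimitive_fractalMatrix hq m) a).trans
        (splitRows_fractalMatrix_isomorphic hq m)
    · exact (bang_stripe_inr_isomorphic_stripe b j a (aPrimitive_fractalMatrix hq m) (ih j)).trans
        (stripe_fractalMatrix_isomorphic hq m)

end fractal

end StarMatrix

theorem stmt16_general (q m : ℕ) (hq : 2 ≤ q)
    (i : Fin (Ncols q m)) (a : ZMod q) :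
    Nat.card (BangCol (fractalMatrix q m) i a) = Ncols q m ∧
    ∃ (e : BangRow (fractalMatrix q m) i a ≃ Fin (Nrows q m))
      (f : BangCol (fractalMatrix q m) i a ≃ Fin (Ncols q m)),
      ∀ ρ c, bangMatrix (fractalMatrix q m) i a ρ c = fractalMatrix q m (e ρ) (f c) := by
  obtain ⟨e, f, h⟩ := (StarMatrix.bangMatrix_isomorphic_bang _ i a).trans
    (StarMatrix.bang_fractalMatrix_isomorphic (by omega) m i a)
  exact ⟨(Nat.card_congr f).trans (Nat.card_fin _), e, f, h⟩

/-- Any bang of the fractal matrix `M_{q,m}` (`m ≥ 1`) yields, up to permutation of rows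
and columns, again the fractal matrix `M_{q,m}`; in particular the number of columns does
not change, so fractal matrices are non-expandable. -/
theorem stmt16 (q m : ℕ) (hq : 2 ≤ q) (hm : 1 ≤ m)
    (i : Fin (Ncols q m)) (a : ZMod q) :
    Nat.card (BangCol (fractalMatrix q m) i a) = Ncols q m ∧
    ∃ (e : BangRow (fractalMatrix q m) i a ≃ Fin (Nrows q m))
      (f : BangCol (fractalMatrix q m) i a ≃ Fin (Ncols q m)),
      ∀ ρ c, bangMatrix (fractalMatrix q m) i a ρ c = fractalMatrix q m (e ρ) (f c) :=
  stmt16_general q m hq i a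
end

section
/- For fixed q ≥ 2 and m ≥ 0, the maximal n for which there exists an A-primitive partition of Z_q^n into q^m subcubes of dimension n-m is N = (q^m - 1)/(q - 1): such a partition exists for n = N, and no such partition exists for n > N. -/
/-!
An A-primitive partition of `Z_q^n` into `K` subcubes has `K ≥ n (q - 1) + 1`. Indeed, the
functions `f x = c₀ + ∑ c, F c (x c)` with `∑ b, F c b = 0` form a space of dimension
`n (q - 1) + 1`, and `f` is determined by its means over the subcubes: if they all vanish,
then computing `∑ x, f x ^ 2` subcube by subcube (where the free coordinates are independent
and centred) gives `q⁻¹ ∑ c, σ c * V c`, with `σ c = ∑ b, F c b ^ 2` and `V c` the total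
volume of the subcubes free in column `c`, whereas on the whole cube it is
`q ^ n c₀ ^ 2 + q ^ (n - 1) ∑ c, σ c`. A-primitivity gives `V c < q ^ n`, so `c₀ = 0` and
`σ = 0`. For `K = q ^ m` this is `n ≤ (q ^ m - 1) / (q - 1)`.

The bound is attained by the prefix tree: columns are the words of length `< m`, rows the words
of length `m`, and a point lies in the subcube of the word read off from it letter by letter.
-/

open Finset

theorem Fintype.sum_piFinset_prod_finset {ι R : Type*} {κ : ι → Type*} [Fintype ι]
    [DecidableEq ι] [CommSemiring R] (t : ∀ i, Finset (κ i)) (s : Finset ι)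
    (f : ∀ i, κ i → R) :
    ∑ x ∈ Fintype.piFinset t, ∏ i ∈ s, f i (x i) =
      (∏ i ∈ s, ∑ j ∈ t i, f i j) * ∏ i ∈ sᶜ, (#(t i) : R) := by
  calc ∑ x ∈ Fintype.piFinset t, ∏ i ∈ s, f i (x i)
      = ∑ x ∈ Fintype.piFinset t, ∏ i, if i ∈ s then f i (x i) else 1 := by
        simp only [prod_ite_mem]
    _ = ∏ i, ∑ j ∈ t i, if i ∈ s then f i j else 1 :=
        (prod_univ_sum t fun i j => if i ∈ s then f i j else 1).symm
    _ = ∏ i, if i ∈ s then ∑ j ∈ t i, f i j else (#(t i) : R) := by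
        refine Finset.prod_congr rfl fun i _ => ?_
        split_ifs <;> simp
    _ = _ := by
        rw [prod_ite]
        congr 2 <;> ext <;> simp

section Patterns

variable {q : ℕ} {ι : Type} [Fintype ι]

def fixedPart (p : ι → Option (ZMod q)) (F : ι → ZMod q → ℚ) : ℚ :=
  ∑ c, (p c).elim 0 (F c)

def freeCoords (p : ι → Option (ZMod q)) : Finset ι := {c | p c = none}

theorem sum_apply_eq_fixedPart_add {p : ι → Option (ZMod q)} {x : ι → ZMod q}
    (hx : x ∈ Subcube p) (F : ι → ZMod q → ℚ) :
    ∑ c, F c (x c) = fixedPart p F + ∑ c ∈ freeCoords p, F c (x c) := by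
  rw [fixedPart, freeCoords, sum_filter, ← sum_add_distrib]
  refine sum_congr rfl fun c _ => ?_
  cases hc : p c with
  | none => simp
  | some a => simp [hx c a hc]

end Patterns

section Cube

variable {q : ℕ} [NeZero q] {ι : Type} [Fintype ι] [DecidableEq ι]

def side : Option (ZMod q) → Finset (ZMod q)
  | none => univ
  | some a => {a}

@[simp] theorem side_none : side (none : Option (ZMod q)) = univ := rfl

@[simp] theorem side_some (a : ZMod q) : side (some a) = {a} := rfl

def cube (p : ι → Option (ZMod q)) : Finset (ι → ZMod q) :=
  Fintype.piFinset fun c => side (p c)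

theorem mem_cube {p : ι → Option (ZMod q)} {x : ι → ZMod q} :
    x ∈ cube p ↔ x ∈ Subcube p := by
  simp only [cube, Fintype.mem_piFinset, Subcube, Set.mem_ofPred_eq]
  refine forall_congr' fun c => ?_
  cases p c <;> simp [eq_comm]

theorem cube_none : cube (fun _ : ι => (none : Option (ZMod q))) = univ := by
  simp [cube]

theorem card_cube_none : #(cube fun _ : ι => (none : Option (ZMod q))) = q ^ Fintype.card ι := by
  simp [cube_none, ZMod.card]

theorem card_cube_pos (p : ι → Option (ZMod q)) : 0 < #(cube p) := by
  refine card_pos.2 ⟨fun c => (p c).getD 0, Fintype.mem_piFinset.2 fun c => ?_⟩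
  cases p c <;> simp

theorem sum_cube_apply_of_eq_none {p : ι → Option (ZMod q)} {c : ι} (hc : p c = none)
    (g : ZMod q → ℚ) :
    q * ∑ x ∈ cube p, g (x c) = #(cube p) * ∑ b, g b := by
  have hsum := Fintype.sum_piFinset_prod_finset (fun c => side (p c)) {c} fun _ => g
  have hcard := prod_mul_prod_compl {c} fun i => (#(side (p i)) : ℚ)
  simp only [prod_singleton, hc, side_none, card_univ, ZMod.card] at hsum hcard
  rw [cube, hsum, Fintype.card_piFinset, Nat.cast_prod, ← hcard]
  ring

theorem sum_cube_mul_eq_zero {p : ι → Option (ZMod q)} {c d : ι} (hc : p c = none)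
    (hcd : c ≠ d) {F : ZMod q → ℚ} (hF : ∑ b, F b = 0) (G : ZMod q → ℚ) :
    ∑ x ∈ cube p, F (x c) * G (x d) = 0 := by
  have h := Fintype.sum_piFinset_prod_finset (fun c => side (p c)) {c, d}
    fun i => if i = c then F else G
  simp only [prod_pair hcd, if_pos, if_neg hcd.symm, hc, side_none, hF, zero_mul] at h
  exact h

theorem sum_cube_sq_sum_of_eq_none {p : ι → Option (ZMod q)} {J : Finset ι}
    (hJ : ∀ c ∈ J, p c = none) {F : ι → ZMod q → ℚ} (hF : ∀ c, ∑ b, F c b = 0) :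
    q * ∑ x ∈ cube p, (∑ c ∈ J, F c (x c)) ^ 2 =
      #(cube p) * ∑ c ∈ J, ∑ b, F c b ^ 2 := by
  have hterm : ∀ c ∈ J, ∀ d ∈ J, q * ∑ x ∈ cube p, F c (x c) * F d (x d) =
      if c = d then #(cube p) * ∑ b, F c b ^ 2 else 0 := by
    intro c hc d _
    split_ifs with hcd
    · subst hcd
      simpa only [sq] using sum_cube_apply_of_eq_none (hJ c hc) fun b => F c b * F c b
    · rw [sum_cube_mul_eq_zero (hJ c hc) hcd (hF c), mul_zero]
  calc q * ∑ x ∈ cube p, (∑ c ∈ J, F c (x c)) ^ 2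
      = ∑ c ∈ J, ∑ d ∈ J, q * ∑ x ∈ cube p, F c (x c) * F d (x d) := by
        simp_rw [sq, sum_mul_sum]
        rw [sum_comm, mul_sum]
        refine sum_congr rfl fun c _ => ?_
        rw [sum_comm, mul_sum]
    _ = #(cube p) * ∑ c ∈ J, ∑ b, F c b ^ 2 := by
        rw [mul_sum]
        refine sum_congr rfl fun c hc => ?_
        rw [sum_congr rfl (hterm c hc), sum_ite_eq, if_pos hc]

theorem sum_cube_sq_const_add_sum {F : ι → ZMod q → ℚ} (hF : ∀ c, ∑ b, F c b = 0)
    (p : ι → Option (ZMod q)) (c₀ : ℚ) :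
    q * ∑ x ∈ cube p, (c₀ + ∑ c, F c (x c)) ^ 2 =
      q * #(cube p) * (c₀ + fixedPart p F) ^ 2 +
        #(cube p) * ∑ c ∈ freeCoords p, ∑ b, F c b ^ 2 := by
  set μ := c₀ + fixedPart p F
  set free := freeCoords p
  have hfree : ∀ c ∈ free, p c = none := fun c hc => (mem_filter.1 hc).2
  have hlin : q * ∑ x ∈ cube p, ∑ c ∈ free, F c (x c) = 0 := by
    rw [sum_comm, mul_sum]
    exact sum_eq_zero fun c hc => by
      rw [sum_cube_apply_of_eq_none (hfree c hc), hF c, mul_zero]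
  calc q * ∑ x ∈ cube p, (c₀ + ∑ c, F c (x c)) ^ 2
      = q * ∑ x ∈ cube p,
          (μ ^ 2 + 2 * μ * ∑ c ∈ free, F c (x c) + (∑ c ∈ free, F c (x c)) ^ 2) := by
        congr 1
        refine sum_congr rfl fun x hx => ?_
        rw [sum_apply_eq_fixedPart_add (mem_cube.1 hx)]
        ring
    _ = q * #(cube p) * μ ^ 2 + 2 * μ * (q * ∑ x ∈ cube p, ∑ c ∈ free, F c (x c)) +
          q * ∑ x ∈ cube p, (∑ c ∈ free, F c (x c)) ^ 2 := by
        rw [sum_add_distrib, sum_add_distrib, sum_const, ← mul_sum, nsmul_eq_mul]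
        ring
    _ = _ := by rw [hlin, sum_cube_sq_sum_of_eq_none hfree hF]; ring

end Cube

section Partition

variable {q : ℕ} [NeZero q] {ι R : Type} [Fintype ι] [DecidableEq ι] [Fintype R]

theorem IsPartitionMatrix.sum_sum_cube {M : R → ι → Option (ZMod q)}
    (hP : IsPartitionMatrix q M) {β : Type*} [AddCommMonoid β] (g : (ι → ZMod q) → β) :
    ∑ r, ∑ x ∈ cube (M r), g x = ∑ x, g x := by
  classical
  rw [← sum_biUnion]
  · congr
    refine eq_univ_of_forall fun x => ?_
    obtain ⟨r, hr⟩ := hP.2 x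
    exact mem_biUnion.2 ⟨r, mem_univ r, mem_cube.2 hr⟩
  · intro r _ r' _ hne
    refine disjoint_left.2 fun x hx hx' => ?_
    exact (Set.eq_empty_iff_forall_notMem.1 (hP.1 r r' hne)) x ⟨mem_cube.1 hx, mem_cube.1 hx'⟩

theorem IsPartitionMatrix.sum_card_cube {M : R → ι → Option (ZMod q)}
    (hP : IsPartitionMatrix q M) : ∑ r, #(cube (M r)) = q ^ Fintype.card ι := by
  calc ∑ r, #(cube (M r)) = ∑ _x : ι → ZMod q, 1 := by
        simpa only [card_eq_sum_ones] using hP.sum_sum_cube fun _ => 1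
    _ = q ^ Fintype.card ι := by simp [ZMod.card]

theorem sum_card_cube_of_eq_none_lt {M : R → ι → Option (ZMod q)}
    (hP : IsPartitionMatrix q M) (hA : APrimitive M) (c : ι) :
    ∑ r with M r c = none, #(cube (M r)) < q ^ Fintype.card ι := by
  obtain ⟨r₁, hr₁⟩ := hA c
  rw [← hP.sum_card_cube]
  refine sum_lt_sum_of_subset (subset_univ _) (mem_univ r₁) ?_ (card_cube_pos _)
    fun _ _ _ => Nat.zero_le _
  simpa [Option.isSome_iff_ne_none] using hr₁

theorem sum_sq_const_add_sum {F : ι → ZMod q → ℚ} (hF : ∀ c, ∑ b, F c b = 0)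
    (c₀ : ℚ) :
    q * ∑ x : ι → ZMod q, (c₀ + ∑ c, F c (x c)) ^ 2 =
      q ^ (Fintype.card ι + 1) * c₀ ^ 2 + q ^ Fintype.card ι * ∑ c, ∑ b, F c b ^ 2 := by
  have h := sum_cube_sq_const_add_sum hF (fun _ => none) c₀
  have hfixed : fixedPart (fun _ : ι => none) F = 0 := sum_eq_zero fun _ _ => rfl
  have hfree : freeCoords (fun _ : ι => (none : Option (ZMod q))) = univ := by
    simp [freeCoords]
  rw [card_cube_none, cube_none, hfixed, hfree] at h
  rw [h]
  push_cast
  ring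

theorem IsPartitionMatrix.sum_sq_eq_of_fixedPart_eq_zero {M : R → ι → Option (ZMod q)}
    (hP : IsPartitionMatrix q M) {F : ι → ZMod q → ℚ} (hF : ∀ c, ∑ b, F c b = 0)
    {c₀ : ℚ} (hμ : ∀ r, c₀ + fixedPart (M r) F = 0) :
    q * ∑ x : ι → ZMod q, (c₀ + ∑ c, F c (x c)) ^ 2 =
      ∑ c, ((∑ r with M r c = none, #(cube (M r)) : ℕ) : ℚ) * ∑ b, F c b ^ 2 := by
  calc q * ∑ x : ι → ZMod q, (c₀ + ∑ c, F c (x c)) ^ 2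
      = ∑ r, (#(cube (M r)) : ℚ) * ∑ c ∈ freeCoords (M r), ∑ b, F c b ^ 2 := by
        rw [← hP.sum_sum_cube, mul_sum]
        refine sum_congr rfl fun r _ => ?_
        rw [sum_cube_sq_const_add_sum hF, hμ]
        ring
    _ = ∑ r, ∑ c, if M r c = none then (#(cube (M r)) : ℚ) * ∑ b, F c b ^ 2 else 0 := by
        refine sum_congr rfl fun r _ => ?_
        rw [freeCoords, sum_filter, mul_sum]
        simp only [mul_ite, mul_zero]
    _ = _ := by
        rw [sum_comm]
        refine sum_congr rfl fun c _ => ?_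
        rw [Nat.cast_sum, sum_mul, sum_filter]

theorem eq_zero_of_fixedPart_eq_zero {M : R → ι → Option (ZMod q)}
    (hP : IsPartitionMatrix q M) (hA : APrimitive M) {F : ι → ZMod q → ℚ}
    (hF : ∀ c, ∑ b, F c b = 0) {c₀ : ℚ} (hμ : ∀ r, c₀ + fixedPart (M r) F = 0) :
    c₀ = 0 ∧ F = 0 := by
  set n := Fintype.card ι
  set σ : ι → ℚ := fun c => ∑ b, F c b ^ 2
  have hσ : ∀ c, 0 ≤ σ c := fun c => sum_nonneg fun b _ => sq_nonneg _
  have hfree : ∀ c, ((∑ r with M r c = none, #(cube (M r)) : ℕ) : ℚ) ≤ q ^ n - 1 := by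
    intro c
    have : ((∑ r with M r c = none, #(cube (M r)) : ℕ) : ℚ) + 1 ≤ q ^ n := by
      exact_mod_cast sum_card_cube_of_eq_none_lt hP hA c
    linarith
  have hkey : q ^ (n + 1) * c₀ ^ 2 + ∑ c, σ c ≤ 0 := by
    have := sum_le_sum fun c (_ : c ∈ univ) => mul_le_mul_of_nonneg_right (hfree c) (hσ c)
    rw [← hP.sum_sq_eq_of_fixedPart_eq_zero hF hμ, ← mul_sum, sum_sq_const_add_sum hF] at this
    linarith
  have hpos : (0 : ℚ) < q ^ (n + 1) := pow_pos (Nat.cast_pos.2 (NeZero.pos q)) _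
  have hσ0 : ∑ c, σ c = 0 :=
    le_antisymm (by nlinarith [sq_nonneg c₀]) (sum_nonneg fun c _ => hσ c)
  have hc₀ : c₀ ^ 2 = 0 := le_antisymm (by nlinarith) (sq_nonneg c₀)
  refine ⟨pow_eq_zero_iff two_ne_zero |>.1 hc₀, ?_⟩
  ext c b
  have hc := (sum_eq_zero_iff_of_nonneg fun c _ => hσ c).1 hσ0 c (mem_univ c)
  exact pow_eq_zero_iff two_ne_zero |>.1 <|
    (sum_eq_zero_iff_of_nonneg fun b _ => sq_nonneg (F c b)).1 hc b (mem_univ b)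

/-- When every `∑ b, F c b` vanishes, the `r`-th component of the image of `(c₀, F)` is the
mean of `x ↦ c₀ + ∑ c, F c (x c)` over the subcube of row `r`. -/
def partitionMeanMap (M : R → ι → Option (ZMod q)) :
    ℚ × (ι → ZMod q → ℚ) →ₗ[ℚ] (R → ℚ) × (ι → ℚ) where
  toFun a := (fun r => a.1 + fixedPart (M r) a.2, fun c => ∑ b, a.2 c b)
  map_add' a a' := by
    refine Prod.ext (funext fun r => ?_) (funext fun c => ?_)
    · simp only [fixedPart, Prod.fst_add, Prod.snd_add, Pi.add_apply]
      rw [add_add_add_comm, ← sum_add_distrib]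
      congr 2
      ext c
      cases M r c <;> simp
    · simp [sum_add_distrib]
  map_smul' t a := by
    refine Prod.ext (funext fun r => ?_) (funext fun c => ?_)
    · simp only [fixedPart, Prod.smul_fst, Prod.smul_snd, Pi.smul_apply, smul_eq_mul,
        RingHom.id_apply, mul_add, mul_sum]
      congr 2
      ext c
      cases M r c <;> simp
    · simp [mul_sum]

theorem partitionMeanMap_injective {M : R → ι → Option (ZMod q)}
    (hP : IsPartitionMatrix q M) (hA : APrimitive M) :
    Function.Injective (partitionMeanMap M) := by
  rw [← LinearMap.ker_eq_bot, LinearMap.ker_eq_bot']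
  intro a ha
  obtain ⟨hμ, hF⟩ := Prod.ext_iff.1 ha
  obtain ⟨hc₀, hF₀⟩ := eq_zero_of_fixedPart_eq_zero hP hA (fun c => congrFun hF c)
    fun r => congrFun hμ r
  exact Prod.ext hc₀ hF₀

theorem IsPartitionMatrix.card_mul_pred_add_one_le {M : R → ι → Option (ZMod q)}
    (hP : IsPartitionMatrix q M) (hA : APrimitive M) :
    Fintype.card ι * (q - 1) + 1 ≤ Fintype.card R := by
  have h := LinearMap.finrank_le_finrank_of_injective (partitionMeanMap_injective hP hA)
  simp only [Module.finrank_prod, Module.finrank_self, Module.finrank_pi_fintype,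
    ZMod.card, sum_const, card_univ, smul_eq_mul] at h
  obtain ⟨q', rfl⟩ := Nat.exists_eq_add_of_le' (NeZero.pos q)
  simp only [Nat.add_sub_cancel]
  linarith

end Partition

section Reindex

variable {q m : ℕ} {R R' C C' : Type}

def IsPrimitivePartition (q m : ℕ) (M : R → C → Option (ZMod q)) : Prop :=
  IsPartitionMatrix q M ∧ (∀ r, numCount (M r) = m) ∧ APrimitive M

theorem mem_subcube_comp_symm (e : C ≃ C') (p : C → Option (ZMod q)) (x : C' → ZMod q) :
    x ∈ Subcube (p ∘ e.symm) ↔ x ∘ e ∈ Subcube p := by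
  constructor
  · intro h c a hc
    simpa using h (e c) a (by simpa using hc)
  · intro h c a hc
    simpa using h (e.symm c) a hc

theorem numCount_comp_symm (e : C ≃ C') (p : C → Option (ZMod q)) :
    numCount (p ∘ e.symm) = numCount p :=
  Nat.card_congr (e.symm.subtypeEquiv fun _ => Iff.rfl)

theorem IsPrimitivePartition.reindex {M : R → C → Option (ZMod q)} (eR : R ≃ R')
    (eC : C ≃ C') (h : IsPrimitivePartition q m M) :
    IsPrimitivePartition q m fun r => M (eR.symm r) ∘ eC.symm := by
  obtain ⟨⟨hdisj, hcover⟩, hnum, hA⟩ := h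
  refine ⟨⟨fun r r' hne => Set.eq_empty_of_forall_notMem fun x hx => ?_, fun x => ?_⟩,
    fun r => ?_, fun c => ?_⟩
  · have hx' := And.imp (mem_subcube_comp_symm eC _ x).1 (mem_subcube_comp_symm eC _ x).1 hx
    exact (hdisj _ _ (eR.symm.injective.ne hne)).subset hx'
  · obtain ⟨r, hr⟩ := hcover (x ∘ eC)
    exact ⟨eR r, by simpa [mem_subcube_comp_symm] using hr⟩
  · rw [numCount_comp_symm]
    exact hnum _
  · obtain ⟨r, hr⟩ := hA (eC.symm c)
    exact ⟨eR r, by simpa using hr⟩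

end Reindex

section PrefixTree

variable {q m : ℕ}

abbrev ShortWord (q m : ℕ) := Σ d : Fin m, Fin d → ZMod q

/-- Row `v` is numerical exactly in the columns indexed by the proper prefixes `w` of `v`,
where its entry is the letter of `v` following `w`. -/
def prefixPattern (v : Fin m → ZMod q) (w : ShortWord q m) : Option (ZMod q) :=
  if Fin.take w.1 w.1.2.le v = w.2 then some (v w.1) else none

theorem mem_subcube_prefixPattern {v : Fin m → ZMod q} {x : ShortWord q m → ZMod q} :
    x ∈ Subcube (prefixPattern v) ↔ ∀ d : Fin m, x ⟨d, Fin.take d d.2.le v⟩ = v d := by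
  constructor
  · intro h d
    exact h _ _ (if_pos rfl)
  · rintro h ⟨d, w⟩ a hw
    simp only [prefixPattern] at hw
    split_ifs at hw with hdw
    obtain rfl := Option.some_inj.1 hw
    rw [← hdw]
    exact h d

theorem eq_of_mem_subcube_prefixPattern {v v' : Fin m → ZMod q} {x : ShortWord q m → ZMod q}
    (hx : x ∈ Subcube (prefixPattern v)) (hx' : x ∈ Subcube (prefixPattern v')) : v = v' := by
  rw [mem_subcube_prefixPattern] at hx hx'
  suffices ∀ k (hk : k < m), v ⟨k, hk⟩ = v' ⟨k, hk⟩ from funext fun d => this d d.2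
  intro k
  induction k using Nat.strong_induction_on with
  | _ k ih =>
    intro hk
    have hprefix : Fin.take k hk.le v = Fin.take k hk.le v' := funext fun i => ih i i.2 _
    rw [← hx ⟨k, hk⟩, ← hx' ⟨k, hk⟩]
    exact congrArg (fun w => x ⟨⟨k, hk⟩, w⟩) hprefix

def decodeLetter (x : ShortWord q m → ZMod q) (d : ℕ) (hd : d < m) : ZMod q :=
  x ⟨⟨d, hd⟩, fun i => decodeLetter x i (i.2.trans hd)⟩
termination_by d

theorem mem_subcube_prefixPattern_decodeLetter (x : ShortWord q m → ZMod q) :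
    x ∈ Subcube (prefixPattern fun d => decodeLetter x d d.2) := by
  rw [mem_subcube_prefixPattern]
  intro d
  rw [decodeLetter]
  rfl

theorem isPartitionMatrix_prefixPattern : IsPartitionMatrix q (prefixPattern (q := q) (m := m)) :=
  ⟨fun _ _ hne => Set.eq_empty_of_forall_notMem fun _ hx =>
      hne (eq_of_mem_subcube_prefixPattern hx.1 hx.2),
    fun x => ⟨_, mem_subcube_prefixPattern_decodeLetter x⟩⟩

theorem isSome_prefixPattern_iff {v : Fin m → ZMod q} {w : ShortWord q m} :
    (prefixPattern v w).isSome ↔ Fin.take w.1 w.1.2.le v = w.2 := by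
  unfold prefixPattern
  split_ifs <;> simp [*]

theorem numCount_prefixPattern (v : Fin m → ZMod q) : numCount (prefixPattern v) = m := by
  refine (Nat.card_congr
    { toFun := fun w => w.1.1
      invFun := fun d => ⟨⟨d, Fin.take d d.2.le v⟩, isSome_prefixPattern_iff.2 rfl⟩
      left_inv := ?_
      right_inv := fun _ => rfl }).trans (Nat.card_fin m)
  rintro ⟨⟨d, w⟩, h⟩
  have hw : Fin.take d d.2.le v = w := isSome_prefixPattern_iff.1 h
  subst hw
  rfl

theorem aPrimitive_prefixPattern : APrimitive (prefixPattern (q := q) (m := m)) := by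
  rintro ⟨d, w⟩
  refine ⟨fun i => if h : i.1 < d then w ⟨i, h⟩ else 0, isSome_prefixPattern_iff.2 ?_⟩
  funext i
  exact dif_pos i.2

theorem card_shortWord [NeZero q] (hq : 2 ≤ q) :
    Fintype.card (ShortWord q m) = (q ^ m - 1) / (q - 1) := by
  rw [Fintype.card_sigma, ← Nat.geomSum_eq hq, ← Fin.sum_univ_eq_sum_range]
  simp [ZMod.card]

theorem exists_isPrimitivePartition (hq : 2 ≤ q) (m : ℕ) :
    ∃ M : Fin (q ^ m) → Fin ((q ^ m - 1) / (q - 1)) → Option (ZMod q),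
      IsPrimitivePartition q m M := by
  have : NeZero q := ⟨by omega⟩
  have eR : (Fin m → ZMod q) ≃ Fin (q ^ m) := Fintype.equivFinOfCardEq (by simp [ZMod.card])
  have eC := Fintype.equivFinOfCardEq (card_shortWord hq (m := m))
  exact ⟨_, IsPrimitivePartition.reindex eR eC
    ⟨isPartitionMatrix_prefixPattern, numCount_prefixPattern, aPrimitive_prefixPattern⟩⟩

end PrefixTree

/-- For fixed `q ≥ 2` and `m`, the maximal `n` admitting an A-primitive partition of
`Z_q^n` into `q^m` subcubes of dimension `n - m` is `N = (q^m - 1)/(q - 1)`: such a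
partition exists for `n = N` and none exists for `n > N`. -/
theorem stmt17 (q m : ℕ) (hq : 2 ≤ q) :
    (∃ M : Fin (q ^ m) → Fin ((q ^ m - 1) / (q - 1)) → Option (ZMod q),
      IsPartitionMatrix q M ∧ (∀ r, numCount (M r) = m) ∧ APrimitive M) ∧
    (∀ n : ℕ, (q ^ m - 1) / (q - 1) < n →
      ¬∃ M : Fin (q ^ m) → Fin n → Option (ZMod q),
        IsPartitionMatrix q M ∧ (∀ r, numCount (M r) = m) ∧ APrimitive M) := by
  have : NeZero q := ⟨by omega⟩
  refine ⟨exists_isPrimitivePartition hq m, fun n hn ⟨M, hP, _, hA⟩ => ?_⟩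
  have hbound := hP.card_mul_pred_add_one_le hA
  rw [Fintype.card_fin, Fintype.card_fin] at hbound
  have : n ≤ (q ^ m - 1) / (q - 1) := (Nat.le_div_iff_mul_le (by omega)).2 (by omega)
  omega
end
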